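/- arXiv:1009.3522 — 7 statements merged into one kernel-verified Lean document; each statement's English description precedes it below -/
import Mathlib

section
/- For α > 0, a > 0, and t ≥ 0: ∫₀^t s/(a s^{−α} + 1) ds = (t²/2)·(1 − ₂F₁(2/α, 1; 1 + 2/α; −t^α/a)), where ₂F₁ is the Gauss hypergeometric function. -/
open Real Set intervalIntegral MeasureTheory


lemma aux_pos {κ : ℝ} (hκ : 0 ≤ κ) {u : ℝ} (hu : 0 ≤ u) : (0:ℝ) < 1 + κ * u := by
  nlinarith

lemma aux1 {κ β : ℝ} (hκ : 0 ≤ κ) (hβ : 0 < β) :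
    ∫ u in (0:ℝ)..1, (1-u) ^ (β-1) * (1+κ*u) ^ (-β)
      = 1/β - κ * ∫ u in (0:ℝ)..1, (1-u) ^ β * (1+κ*u) ^ (-β-1) := by
  have hc1 : ContinuousOn (fun u : ℝ => (1+κ*u) ^ (-β)) (Icc (0:ℝ) 1) := by
    apply ContinuousOn.rpow_const
    · fun_prop
    · intro x hx
      exact Or.inl (aux_pos hκ hx.1).ne'
  have hc2 : ContinuousOn (fun u : ℝ => (1-u) ^ β * (1+κ*u) ^ (-β-1)) (Icc (0:ℝ) 1) := by
    apply ContinuousOn.mul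
    · exact ((Real.continuous_rpow_const hβ.le).comp (continuous_const.sub continuous_id)).continuousOn
    · apply ContinuousOn.rpow_const
      · fun_prop
      · intro x hx
        exact Or.inl (aux_pos hκ hx.1).ne'
  have huIcc : Set.uIcc (0:ℝ) 1 = Icc 0 1 := uIcc_of_le zero_le_one
  have hint1 : IntervalIntegrable (fun u : ℝ => (1-u) ^ (β-1) * (1+κ*u) ^ (-β)) volume 0 1 := by
    have h0 : IntervalIntegrable (fun u : ℝ => (1-u) ^ (β-1)) volume 0 1 := by
      have := (intervalIntegral.intervalIntegrable_rpow' (a := 0) (b := 1)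
        (by linarith : (-1:ℝ) < β - 1)).comp_sub_left 1
      simpa using this.symm
    exact h0.mul_continuousOn (by rw [huIcc]; exact hc1)
  have hint2 : IntervalIntegrable (fun u : ℝ => (1-u) ^ β * (1+κ*u) ^ (-β-1)) volume 0 1 := by
    rw [← huIcc] at hc2
    exact hc2.intervalIntegrable
  have key : ∫ u in (0:ℝ)..1,
      ((1-u) ^ (β-1) * (1+κ*u) ^ (-β) + κ * ((1-u) ^ β * (1+κ*u) ^ (-β-1))) = 1/β := by
    have := intervalIntegral.integral_eq_sub_of_hasDerivAt_of_le (a := 0) (b := 1)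
      (f := fun u : ℝ => -(1/β) * ((1-u) ^ β * (1+κ*u) ^ (-β)))
      (f' := fun u : ℝ => (1-u) ^ (β-1) * (1+κ*u) ^ (-β) + κ * ((1-u) ^ β * (1+κ*u) ^ (-β-1)))
      zero_le_one
      ?_ ?_ (hint1.add (hint2.const_mul κ))
    · rw [this]
      norm_num [Real.zero_rpow hβ.ne', Real.one_rpow]
    · apply ContinuousOn.mul continuousOn_const
      apply ContinuousOn.mul
      · exact ((Real.continuous_rpow_const hβ.le).comp (continuous_const.sub continuous_id)).continuousOn
      · exact hc1
    · intro x hx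
      have h1 : (0:ℝ) < 1 - x := by linarith [hx.2]
      have h2 : (0:ℝ) < 1 + κ * x := aux_pos hκ hx.1.le
      have dA : HasDerivAt (fun u : ℝ => (1-u) ^ β) (β * (1-x) ^ (β-1) * (-1)) x := by
        exact (Real.hasDerivAt_rpow_const (Or.inl h1.ne')).comp x
          ((hasDerivAt_id x).const_sub 1)
      have dB : HasDerivAt (fun u : ℝ => (1+κ*u) ^ (-β)) ((-β) * (1+κ*x) ^ (-β-1) * κ) x := by
        have inner : HasDerivAt (fun u : ℝ => 1 + κ * u) κ x := by
          simpa using ((hasDerivAt_id x).const_mul κ).const_add 1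
        exact (Real.hasDerivAt_rpow_const (p := -β) (Or.inl h2.ne')).comp x inner
      have := (dA.mul dB).const_mul (-(1/β))
      refine this.congr_deriv ?_
      have e : -(1/β) * β = -1 := by field_simp
      have e2 : ∀ X Y Z W : ℝ, X * Y + κ * (Z * W) = -(1/β) * (β * X * -1 * Y + Z * (-β * W * κ)) := by
        intro X Y Z W
        rw [show -(1/β) * (β * X * -1 * Y + Z * (-β * W * κ)) = (-(1/β) * β) * -(X * Y + κ * (Z * W)) by ring, e]
        ring
      exact (e2 _ _ _ _).symm
  rw [intervalIntegral.integral_add hint1 (hint2.const_mul κ),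
    intervalIntegral.integral_const_mul] at key
  linarith


lemma rpow_negsub {x : ℝ} (hx : 0 < x) (β : ℝ) : x ^ (-β-1) = (x ^ β * x)⁻¹ := by
  rw [show -β-1 = -(β+1) by ring, Real.rpow_neg hx.le, Real.rpow_add hx, Real.rpow_one]

lemma aux2 {κ β : ℝ} (hκ : 0 ≤ κ) (hβ : 0 < β) :
    ∫ u in (0:ℝ)..1, (1-u) ^ β * (1+κ*u) ^ (-β-1)
      = ∫ y in (0:ℝ)..1, y ^ β * (1+κ*y)⁻¹ := by
  have huIcc : Set.uIcc (0:ℝ) 1 = Icc 0 1 := uIcc_of_le zero_le_one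
  have hκ1 : (0:ℝ) < 1 + κ := by linarith
  set f : ℝ → ℝ := fun y => (1-y)/(1+κ*y) with hf_def
  set f' : ℝ → ℝ := fun y => -((1+κ)/(1+κ*y)^2) with hf'_def
  set g : ℝ → ℝ := fun u => (1-u) ^ β * (1+κ*u) ^ (-β-1) with hg_def
  have hne : ∀ y ∈ Icc (0:ℝ) 1, 1 + κ * y ≠ 0 := fun y hy => (aux_pos hκ hy.1).ne'
  have hf : ContinuousOn f (Set.uIcc (0:ℝ) 1) := by
    rw [huIcc]
    exact ContinuousOn.div (by fun_prop) (by fun_prop) hne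
  have hmaps : ∀ y ∈ Icc (0:ℝ) 1, f y ∈ Icc (0:ℝ) 1 := by
    intro y hy
    have h2 := aux_pos hκ hy.1
    constructor
    · exact div_nonneg (by linarith [hy.2]) h2.le
    · rw [div_le_one h2]
      nlinarith [mul_nonneg hκ hy.1, hy.1, hy.2]
  have hgc : ContinuousOn g (Icc (0:ℝ) 1) := by
    apply ContinuousOn.mul
    · exact ((Real.continuous_rpow_const hβ.le).comp (continuous_const.sub continuous_id)).continuousOn
    · exact ContinuousOn.rpow_const (by fun_prop) (fun x hx => Or.inl (aux_pos hκ hx.1).ne')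
  have key := intervalIntegral.integral_comp_smul_deriv'' (a := 0) (b := 1)
    (f := f) (f' := f') (g := g) hf ?_ ?_ ?_
  · have hf0 : f 0 = 1 := by simp [hf_def]
    have hf1 : f 1 = 0 := by simp [hf_def]
    rw [hf0, hf1] at key
    have lhs_eq : ∫ y in (0:ℝ)..1, f' y • (g ∘ f) y
        = ∫ y in (0:ℝ)..1, -(y ^ β * (1+κ*y)⁻¹) := by
      apply intervalIntegral.integral_congr
      rw [huIcc]
      intro y hy
      have h2 : (0:ℝ) < 1 + κ * y := aux_pos hκ hy.1
      have e1 : 1 - f y = y * (1+κ) / (1+κ*y) := by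
        rw [hf_def]; dsimp only; rw [eq_div_iff h2.ne', sub_mul, div_mul_cancel₀ _ h2.ne']; ring
      have e2 : 1 + κ * f y = (1+κ) / (1+κ*y) := by
        rw [hf_def]; field_simp; ring
      simp only [Function.comp_apply, smul_eq_mul, hg_def, e1, e2]
      rw [Real.div_rpow (mul_nonneg hy.1 hκ1.le) h2.le, Real.mul_rpow hy.1 hκ1.le,
        rpow_negsub (div_pos hκ1 h2) β, Real.div_rpow hκ1.le h2.le]
      have hA : (0:ℝ) < (1+κ*y) ^ β := Real.rpow_pos_of_pos h2 β
      have hB : (0:ℝ) < (1+κ) ^ β := Real.rpow_pos_of_pos hκ1 β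
      rw [hf'_def]
      field_simp
    rw [lhs_eq, intervalIntegral.integral_neg, intervalIntegral.integral_symm 0 1] at key
    show (∫ u in (0:ℝ)..1, g u) = ∫ y in (0:ℝ)..1, y ^ β * (1+κ*y)⁻¹
    linarith [key]
  · intro x hx
    simp only [min_eq_left zero_le_one, max_eq_right zero_le_one] at hx
    have h2 : (0:ℝ) < 1 + κ * x := aux_pos hκ hx.1.le
    have d : HasDerivAt f ((-1 * (1+κ*x) - (1-x) * κ)/(1+κ*x)^2) x := by
      apply HasDerivAt.div
      · simpa using (hasDerivAt_id x).const_sub 1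
      · simpa using ((hasDerivAt_id x).const_mul κ).const_add 1
      · exact h2.ne'
    have : (-1 * (1+κ*x) - (1-x) * κ)/(1+κ*x)^2 = f' x := by
      rw [hf'_def]
      field_simp
      ring
    rw [this] at d
    exact d.hasDerivWithinAt
  · rw [huIcc]
    apply ContinuousOn.neg
    exact ContinuousOn.div (by fun_prop) (by fun_prop)
      (fun y hy => pow_ne_zero 2 (hne y hy))
  · apply hgc.mono
    rintro _ ⟨y, hy, rfl⟩
    rw [huIcc] at hy
    exact hmaps y hy


lemma rpow_two_of_pos {x γ : ℝ} (hx : 0 < x) (hγ : 0 < γ) : (x ^ γ) ^ (2/γ) = x ^ 2 := by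
  rw [← Real.rpow_natCast x 2, ← Real.rpow_mul hx.le]
  congr 1
  rw [mul_comm, div_mul_cancel₀ _ hγ.ne']
  norm_num

lemma aux3 {α a t : ℝ} (hα : 0 < α) (ha : 0 < a) (ht : 0 < t) :
    ∫ y in (0:ℝ)..1, y ^ (2/α) * (1 + (t ^ α / a) * y)⁻¹
      = (α * a / (t ^ α * t ^ 2)) * ∫ s in (0:ℝ)..t, s / (a * s ^ (-α) + 1) := by
  have htα : (0:ℝ) < t ^ α := Real.rpow_pos_of_pos ht α
  have hβ : (0:ℝ) < 2/α := by positivity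
  have huIcc : Set.uIcc (0:ℝ) t = Icc 0 t := uIcc_of_le ht.le
  set κ : ℝ := t ^ α / a with hκ_def
  set c : ℝ := α * a / (t ^ α * t ^ 2) with hc_def
  set f : ℝ → ℝ := fun s => s ^ α / t ^ α with hf_def
  set f' : ℝ → ℝ := fun s => α * s ^ (α - 1) / t ^ α with hf'_def
  set g : ℝ → ℝ := fun y => y ^ (2/α) * (1 + κ * y)⁻¹ with hg_def
  set φ : ℝ → ℝ := fun s => c * (s * s ^ α / (a + s ^ α)) with hφ_def
  have hdenpos : ∀ s : ℝ, 0 ≤ s → (0:ℝ) < a + s ^ α := by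
    intro s hs
    have := Real.rpow_nonneg hs α
    linarith
  have hmaps : ∀ s ∈ Icc (0:ℝ) t, f s ∈ Icc (0:ℝ) 1 := by
    intro s hs
    constructor
    · exact div_nonneg (Real.rpow_nonneg hs.1 α) htα.le
    · rw [div_le_one htα]
      exact Real.rpow_le_rpow hs.1 hs.2 hα.le
  have hgc : ContinuousOn g (Icc (0:ℝ) 1) := by
    apply ContinuousOn.mul (Real.continuous_rpow_const hβ.le).continuousOn
    apply ContinuousOn.inv₀ (by fun_prop)
    intro y hy
    have : 0 ≤ κ * y := mul_nonneg (by positivity) hy.1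
    linarith
  have E1 : ∀ s ∈ Icc (0:ℝ) t, f' s • (g ∘ f) s = φ s := by
    intro s hs
    rcases eq_or_lt_of_le hs.1 with h0 | h0
    · simp only [← h0, Function.comp_apply, smul_eq_mul, hf_def, hg_def, hφ_def]
      rw [Real.zero_rpow hα.ne', zero_div, Real.zero_rpow hβ.ne']
      simp
    · have hsα : (0:ℝ) < s ^ α := Real.rpow_pos_of_pos h0 α
      have hden := hdenpos s h0.le
      simp only [Function.comp_apply, smul_eq_mul, hf_def, hf'_def, hg_def, hφ_def]
      rw [Real.div_rpow (Real.rpow_nonneg h0.le α) htα.le,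
        rpow_two_of_pos h0 hα, rpow_two_of_pos ht hα,
        Real.rpow_sub h0, Real.rpow_one,
        show 1 + κ * (s ^ α / t ^ α) = (a + s ^ α) / a by
          rw [hκ_def]; field_simp,
        hc_def]
      field_simp
  have E2 : ∀ s ∈ Icc (0:ℝ) t, c * (s / (a * s ^ (-α) + 1)) = φ s := by
    intro s hs
    rcases eq_or_lt_of_le hs.1 with h0 | h0
    · have hs0 : s = 0 := h0.symm
      subst hs0
      simp [hφ_def, Real.zero_rpow (neg_ne_zero.mpr hα.ne'), Real.zero_rpow hα.ne']
    · have hsα : (0:ℝ) < s ^ α := Real.rpow_pos_of_pos h0 α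
      have hden := hdenpos s h0.le
      simp only [hφ_def]
      rw [Real.rpow_neg h0.le]
      rw [show a * (s ^ α)⁻¹ + 1 = (a + s ^ α) / s ^ α by field_simp]
      rw [div_div_eq_mul_div]
      try ring
  have hφc : ContinuousOn φ (Icc (0:ℝ) t) := by
    apply ContinuousOn.mul continuousOn_const
    apply ContinuousOn.div
    · exact (continuous_id.mul (Real.continuous_rpow_const hα.le)).continuousOn
    · exact (continuous_const.add (Real.continuous_rpow_const hα.le)).continuousOn
    · intro s hs
      exact (hdenpos s hs.1).ne'
  have hf : ContinuousOn f (Set.uIcc (0:ℝ) t) :=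
    ((Real.continuous_rpow_const hα.le).continuousOn).div_const _
  have key := intervalIntegral.integral_comp_smul_deriv''' (a := 0) (b := t)
    (f := f) (f' := f') (g := g) hf ?_ ?_ ?_ ?_
  · have hf0 : f 0 = 0 := by
      simp only [hf_def]; rw [Real.zero_rpow hα.ne', zero_div]
    have hft : f t = 1 := by
      simp only [hf_def]; rw [div_self htα.ne']
    rw [hf0, hft] at key
    have lhs_eq : ∫ s in (0:ℝ)..t, f' s • (g ∘ f) s
        = ∫ s in (0:ℝ)..t, c * (s / (a * s ^ (-α) + 1)) := by
      apply intervalIntegral.integral_congr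
      rw [huIcc]
      intro s hs
      exact (E1 s hs).trans (E2 s hs).symm
    rw [lhs_eq, intervalIntegral.integral_const_mul] at key
    exact key.symm
  · intro x hx
    rw [min_eq_left ht.le, max_eq_right ht.le] at hx
    exact ((Real.hasDerivAt_rpow_const (p := α) (Or.inl hx.1.ne')).div_const
      (t ^ α)).hasDerivWithinAt
  · apply hgc.mono
    rintro _ ⟨s, hs, rfl⟩
    rw [min_eq_left ht.le, max_eq_right ht.le] at hs
    exact hmaps s (Ioo_subset_Icc_self hs)
  · apply ContinuousOn.integrableOn_compact (isCompact_uIcc.image_of_continuousOn hf)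
    apply hgc.mono
    rintro _ ⟨s, hs, rfl⟩
    rw [huIcc] at hs
    exact hmaps s hs
  · rw [huIcc]
    apply (hφc.integrableOn_compact isCompact_Icc).congr_fun _ measurableSet_Icc
    intro s hs
    exact (E1 s hs).symm


/-- The Gauss hypergeometric function `₂F₁(b, c; d; z)` via Euler's integral representation,
valid in particular for real `z < 1` and `d > c > 0`. -/
noncomputable def gaussHypergeometric (b c d z : ℝ) : ℝ :=
  (Real.Gamma d / (Real.Gamma c * Real.Gamma (d - c))) *
    ∫ u in (0:ℝ)..1, u ^ (c - 1) * (1 - u) ^ (d - c - 1) * (1 - z * u) ^ (-b)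

/-- `∫₀^t s/(a s^{−α} + 1) ds = (t²/2)(1 − ₂F₁(2/α, 1; 1 + 2/α; −t^α/a))`. -/
theorem integral_hypergeometric (α a t : ℝ) (hα : 0 < α) (ha : 0 < a) (ht : 0 ≤ t) :
    ∫ s in (0:ℝ)..t, s / (a * s ^ (-α) + 1) =
      t ^ 2 / 2 * (1 - gaussHypergeometric (2 / α) 1 (1 + 2 / α) (-(t ^ α / a))) := by
  rcases eq_or_lt_of_le ht with h0 | h0
  · rw [← h0]
    norm_num
  · have hβ : (0:ℝ) < 2/α := by positivity
    have htα : (0:ℝ) < t ^ α := Real.rpow_pos_of_pos h0 α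
    have hκ : (0:ℝ) ≤ t ^ α / a := by positivity
    have hG : gaussHypergeometric (2/α) 1 (1+2/α) (-(t ^ α / a))
        = (2/α) * ∫ u in (0:ℝ)..1, (1-u) ^ (2/α-1) * (1+(t ^ α / a)*u) ^ (-(2/α)) := by
      unfold gaussHypergeometric
      have e : ∀ u : ℝ, u ^ ((1:ℝ)-1) * (1-u) ^ (1+2/α-1-1) * (1 - -(t ^ α / a)*u) ^ (-(2/α))
          = (1-u) ^ (2/α-1) * (1+(t ^ α / a)*u) ^ (-(2/α)) := by
        intro u
        rw [show (1:ℝ)-1 = 0 by ring, show (1:ℝ)+2/α-1-1 = 2/α-1 by ring,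
          show (1:ℝ) - -(t ^ α / a)*u = 1+(t ^ α / a)*u by ring, Real.rpow_zero, one_mul]
      simp only [e]
      have hΓ : (0:ℝ) < Real.Gamma (2/α) := Real.Gamma_pos_of_pos hβ
      rw [show (1:ℝ)+2/α-1 = 2/α by ring, Real.Gamma_one,
        show (1:ℝ)+2/α = 2/α+1 by ring,
        Real.Gamma_add_one hβ.ne', one_mul, mul_div_cancel_right₀ _ hΓ.ne']
    have h1 := aux1 hκ hβ
    have h2 := aux2 hκ hβ
    have h3 := aux3 hα ha h0
    rw [hG, h1, h2, h3]
    have ht' : t ≠ 0 := h0.ne'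
    field_simp
    ring
end

section
/- Let γ(R) = g₀ / (K(h₀ R^{−α} + I₂)) where g₀, h₀ are independent Exp(1) random variables, I₂ is an independent Poisson shot noise with Laplace transform E[e^{−sI₂}] = exp(−λ C_α s^{2/α}), K > 0, and R > 0 is fixed. Then P(γ(R) ≥ Γ) = exp(−λ C_α (KΓ)^{2/α}) / (Γ K R^{−α} + 1) for all Γ ≥ 0. -/
open MeasureTheory ProbabilityTheory Real

section Aux

variable {Ω : Type*} [MeasurableSpace Ω] (μ : Measure Ω) [IsProbabilityMeasure μ]

/-- closed tail of an Exp(1) random variable -/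
lemma exp_tail_Ici (X : Ω → ℝ)
    (hexp : ∀ s : ℝ, 0 ≤ s → μ {ω | s < X ω} = ENNReal.ofReal (Real.exp (-s)))
    (t : ℝ) (ht : 0 ≤ t) : μ {ω | t ≤ X ω} = ENNReal.ofReal (Real.exp (-t)) := by
  refine le_antisymm ?_ ?_
  · rcases eq_or_lt_of_le ht with h | h
    · simpa [← h] using (measure_mono (Set.subset_univ _)).trans_eq (measure_univ)
    · have hseq : Filter.Tendsto (fun n : ℕ => t - t / (n + 1)) Filter.atTop (nhds t) := by
        have h0 : Filter.Tendsto (fun n : ℕ => t / (n + 1)) Filter.atTop (nhds 0) := by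
          simpa [div_eq_mul_inv, one_div] using
            (tendsto_one_div_add_atTop_nhds_zero_nat).const_mul t
        simpa using Filter.Tendsto.sub (tendsto_const_nhds (x := t)) h0
      have hlim : Filter.Tendsto
          (fun n : ℕ => ENNReal.ofReal (Real.exp (-(t - t / (n + 1))))) Filter.atTop
          (nhds (ENNReal.ofReal (Real.exp (-t)))) := by
        exact (ENNReal.continuous_ofReal.tendsto _).comp
          ((Real.continuous_exp.tendsto _).comp hseq.neg)
      refine ge_of_tendsto hlim (Filter.Eventually.of_forall fun n => ?_)
      have hpos : 0 < t / (n + 1) := by positivity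
      have hnn : 0 ≤ t - t / (n + 1) := by
        have : t / (n + 1) ≤ t := by
          apply div_le_self ht
          have : (0:ℝ) ≤ (n:ℝ) := Nat.cast_nonneg n
          linarith
        linarith
      rw [← hexp _ hnn]
      refine measure_mono (Set.setOf_subset_setOf.2 fun ω hω => ?_)
      linarith
  · rw [← hexp t ht]
    exact measure_mono (Set.setOf_subset_setOf.2 fun ω hω => hω.le)

lemma exp_nonpos_null (X : Ω → ℝ) (hX : Measurable X)
    (hexp : ∀ s : ℝ, 0 ≤ s → μ {ω | s < X ω} = ENNReal.ofReal (Real.exp (-s))) :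
    μ {ω | X ω ≤ 0} = 0 := by
  have h0 : μ {ω | 0 < X ω} = 1 := by simpa using hexp 0 le_rfl
  have hset : {ω | X ω ≤ 0} = {ω | 0 < X ω}ᶜ := by
    ext ω; simp [not_lt]
  rw [hset, measure_compl (measurableSet_lt measurable_const hX) (measure_ne_top μ _), h0,
    measure_univ, tsub_self]

/-- Laplace transform of an Exp(1) random variable. -/
lemma exp_laplace (X : Ω → ℝ) (hX : Measurable X)
    (hexp : ∀ s : ℝ, 0 ≤ s → μ {ω | s < X ω} = ENNReal.ofReal (Real.exp (-s)))
    (c : ℝ) (hc : 0 ≤ c) :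
    ∫ ω, Real.exp (-(c * X ω)) ∂μ = 1 / (c + 1) := by
  rcases eq_or_lt_of_le hc with rfl | hc
  · simp
  have hnull : μ {ω | X ω ≤ 0} = 0 := exp_nonpos_null μ X hX hexp
  have haeX : ∀ᵐ ω ∂μ, 0 < X ω := by
    have : ∀ᵐ ω ∂μ, ¬ (X ω ≤ 0) := by
      rw [ae_iff]; simpa using hnull
    filter_upwards [this] with ω hω; linarith [not_le.1 hω]
  set f : Ω → ℝ := fun ω => Real.exp (-(c * X ω)) with hf
  have hfm : Measurable f := (measurable_const.mul hX).neg.exp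
  have hfint : Integrable f μ := by
    refine ⟨hfm.aestronglyMeasurable, HasFiniteIntegral.of_bounded (C := 1) ?_⟩
    filter_upwards [haeX] with ω hω
    rw [Real.norm_eq_abs, abs_of_pos (Real.exp_pos _)]
    exact Real.exp_le_one_iff.2 (by nlinarith)
  have hfnn : 0 ≤ᵐ[μ] f := Filter.Eventually.of_forall fun ω => (Real.exp_pos _).le
  rw [hfint.integral_eq_integral_meas_lt hfnn]
  -- pointwise identification of the tail probability
  have hpt : ∀ t ∈ Set.Ioi (0:ℝ),
      (μ {a | t < f a}).toReal = if t < 1 then 1 - t ^ c⁻¹ else 0 := by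
    intro t ht
    rw [Set.mem_Ioi] at ht
    split_ifs with h1
    · have hb : 0 < -Real.log t / c := by
        have : Real.log t < 0 := Real.log_neg ht h1
        exact div_pos (by linarith) hc
      have hset : {a | t < f a} = {a | X a < -Real.log t / c} := by
        ext a
        simp only [Set.mem_setOf_eq, hf]
        constructor
        · intro h
          have h2 : Real.log t < -(c * X a) := (Real.log_lt_iff_lt_exp ht).2 h
          rw [lt_div_iff₀ hc]
          nlinarith
        · intro h
          refine (Real.log_lt_iff_lt_exp ht).1 ?_
          rw [lt_div_iff₀ hc] at h
          nlinarith
      rw [hset]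
      have hcompl : {a | X a < -Real.log t / c} = {a | -Real.log t / c ≤ X a}ᶜ := by
        ext a; simp [not_le]
      rw [hcompl, measure_compl (measurableSet_le measurable_const hX) (measure_ne_top μ _),
        measure_univ, exp_tail_Ici μ X hexp _ hb.le]
      have hle : ENNReal.ofReal (Real.exp (-(-Real.log t / c))) ≤ 1 := by
        rw [ENNReal.ofReal_le_one]
        exact Real.exp_le_one_iff.2 (by simpa using hb.le)
      rw [ENNReal.toReal_sub_of_le hle (by simp), ENNReal.toReal_one,
        ENNReal.toReal_ofReal (Real.exp_pos _).le]
      congr 2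
      rw [Real.rpow_def_of_pos ht]
      congr 1
      field_simp
    · have hsub : {a | t < f a} ⊆ {a | X a ≤ 0} := by
        intro a ha
        simp only [Set.mem_setOf_eq, hf] at ha ⊢
        by_contra hX0
        push_neg at hX0
        have : Real.exp (-(c * X a)) ≤ 1 := Real.exp_le_one_iff.2 (by nlinarith)
        push_neg at h1
        linarith
      have : μ {a | t < f a} = 0 := measure_mono_null hsub hnull
      simp [this]
  have hpt' : ∀ t ∈ Set.Ioi (0:ℝ),
      μ.real {a | t < f a} = if t < 1 then 1 - t ^ c⁻¹ else 0 := hpt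
  rw [setIntegral_congr_fun measurableSet_Ioi hpt']
  have hsplit : Set.Ioc (0:ℝ) 1 ∪ Set.Ioi (1:ℝ) = Set.Ioi 0 :=
    Set.Ioc_union_Ioi_eq_Ioi zero_le_one
  have hrint : IntegrableOn (fun t : ℝ => 1 - t ^ c⁻¹) (Set.Ioc 0 1) := by
    have := (intervalIntegral.intervalIntegrable_rpow' (a := 0) (b := 1)
      (r := c⁻¹) (by have := inv_pos.2 hc; linarith)).1
    exact (integrableOn_const measure_Ioc_lt_top.ne).sub this
  have hint1 : IntegrableOn (fun t : ℝ => if t < 1 then 1 - t ^ c⁻¹ else 0) (Set.Ioc 0 1) := by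
    refine hrint.congr_fun (fun t ht => ?_) measurableSet_Ioc
    rcases lt_or_eq_of_le ht.2 with h | h
    · simp [h]
    · simp [h]
  have hint2 : IntegrableOn (fun t : ℝ => if t < 1 then 1 - t ^ c⁻¹ else 0) (Set.Ioi 1) := by
    refine (integrableOn_zero (s := Set.Ioi 1)).congr_fun (fun t ht => ?_) measurableSet_Ioi
    rw [Set.mem_Ioi] at ht
    simp [not_lt.2 ht.le]
  rw [← hsplit, setIntegral_union (Set.Ioc_disjoint_Ioi le_rfl) measurableSet_Ioi hint1 hint2]
  have hz : ∫ t in Set.Ioi (1:ℝ), (if t < 1 then 1 - t ^ c⁻¹ else 0) = 0 := by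
    rw [setIntegral_congr_fun measurableSet_Ioi (g := fun _ => (0:ℝ))
      (fun t ht => by rw [Set.mem_Ioi] at ht; simp [not_lt.2 ht.le])]
    simp
  rw [hz, add_zero,
    setIntegral_congr_fun measurableSet_Ioc (g := fun t : ℝ => 1 - t ^ c⁻¹)
      (fun t ht => by
        rcases lt_or_eq_of_le ht.2 with h | h
        · simp [h]
        · simp [h])]
  rw [← intervalIntegral.integral_of_le zero_le_one]
  have hcinv : (-1:ℝ) < c⁻¹ := by have := inv_pos.2 hc; linarith
  rw [intervalIntegral.integral_sub intervalIntegrable_const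
    (intervalIntegral.intervalIntegrable_rpow' hcinv),
    integral_rpow (Or.inl hcinv)]
  rw [intervalIntegral.integral_const]
  rw [Real.one_rpow, Real.zero_rpow (by positivity : (0:ℝ) < c⁻¹ + 1).ne']
  have hc1 : c⁻¹ + 1 ≠ 0 := by positivity
  field_simp
  ring

end Aux

/-- Per-location SIR CCDF for a closed-access cellular user:
`γ(R) = g₀ / (K(h₀ R^{−α} + I₂))` with `g₀, h₀ ~ Exp(1)` and shot noise `I₂`,
all mutually independent, has
`P(γ(R) ≥ Γ) = exp(−λ C_α (KΓ)^{2/α}) / (Γ K R^{−α} + 1)`. -/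
theorem sir_ccdf_closed_access {Ω : Type*} [MeasurableSpace Ω] (μ : Measure Ω)
    [IsProbabilityMeasure μ]
    (g₀ h₀ I₂ : Ω → ℝ) (hg : Measurable g₀) (hh : Measurable h₀) (hI : Measurable I₂)
    (hindep : iIndepFun ![g₀, h₀, I₂] μ)
    (hgexp : ∀ s : ℝ, 0 ≤ s → μ {ω | s < g₀ ω} = ENNReal.ofReal (Real.exp (-s)))
    (hhexp : ∀ s : ℝ, 0 ≤ s → μ {ω | s < h₀ ω} = ENNReal.ofReal (Real.exp (-s)))
    (lam α K R : ℝ) (hlam : 0 < lam) (hα : 2 < α) (hK : 0 < K) (hR : 0 < R)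
    (hInn : ∀ ω, 0 ≤ I₂ ω)
    (hIlap : ∀ s : ℝ, 0 ≤ s →
      ∫ ω, Real.exp (-(s * I₂ ω)) ∂μ =
        Real.exp (-(lam * (2 * π ^ 2 / α * (Real.sin (2 * π / α))⁻¹) * s ^ (2 / α))))
    (Γ : ℝ) (hΓ : 0 ≤ Γ) :
    (μ {ω | Γ ≤ g₀ ω / (K * (h₀ ω * R ^ (-α) + I₂ ω))}).toReal =
      Real.exp (-(lam * (2 * π ^ 2 / α * (Real.sin (2 * π / α))⁻¹) * (K * Γ) ^ (2 / α))) /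
        (Γ * K * R ^ (-α) + 1) := by
  set c : ℝ := Γ * K * R ^ (-α) with hcdef
  set s : ℝ := K * Γ with hsdef
  have hRα : (0:ℝ) < R ^ (-α) := Real.rpow_pos_of_pos hR _
  have hcnn : 0 ≤ c := by positivity
  have hsnn : 0 ≤ s := by positivity
  have hhnull : μ {ω | h₀ ω ≤ 0} = 0 := exp_nonpos_null μ h₀ hh hhexp
  have haeh : ∀ᵐ ω ∂μ, 0 < h₀ ω := by
    have : ∀ᵐ ω ∂μ, ¬ (h₀ ω ≤ 0) := by rw [ae_iff]; simpa using hhnull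
    filter_upwards [this] with ω hω; linarith [not_le.1 hω]
  -- step 1 : rewrite the event a.e.
  have hstep1 : μ {ω | Γ ≤ g₀ ω / (K * (h₀ ω * R ^ (-α) + I₂ ω))}
      = μ {ω | c * h₀ ω + s * I₂ ω ≤ g₀ ω} := by
    apply measure_congr
    rw [Filter.eventuallyEq_set]
    filter_upwards [haeh] with ω hω
    have hD : 0 < K * (h₀ ω * R ^ (-α) + I₂ ω) := by
      have := hInn ω; positivity
    show (Γ ≤ g₀ ω / (K * (h₀ ω * R ^ (-α) + I₂ ω))) ↔ (c * h₀ ω + s * I₂ ω ≤ g₀ ω)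
    have he : c * h₀ ω + s * I₂ ω = Γ * (K * (h₀ ω * R ^ (-α) + I₂ ω)) := by
      rw [hcdef, hsdef]; ring
    rw [le_div_iff₀ hD, he]
  rw [hstep1]
  -- step 2 : independence of g₀ from (h₀, I₂)
  have hmeas3 : ∀ i, Measurable (![g₀, h₀, I₂] i) := by
    intro i
    fin_cases i <;> first | exact hg | exact hh | exact hI
  have hindepW : IndepFun (fun ω => (h₀ ω, I₂ ω)) g₀ μ := by
    have := hindep.indepFun_prodMk hmeas3 1 2 0 (by decide) (by decide)
    simpa using this
  have hW : Measurable fun ω => (h₀ ω, I₂ ω) := hh.prodMk hI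
  have hmap : μ.map (fun ω => ((h₀ ω, I₂ ω), g₀ ω))
      = (μ.map fun ω => (h₀ ω, I₂ ω)).prod (μ.map g₀) :=
    (indepFun_iff_map_prod_eq_prod_map_map hW.aemeasurable hg.aemeasurable).1 hindepW
  have hSmeas : MeasurableSet {q : (ℝ × ℝ) × ℝ | c * q.1.1 + s * q.1.2 ≤ q.2} :=
    measurableSet_le (by fun_prop) (by fun_prop)
  haveI : IsProbabilityMeasure (μ.map g₀) := Measure.isProbabilityMeasure_map hg.aemeasurable
  haveI : IsProbabilityMeasure (μ.map fun ω => (h₀ ω, I₂ ω)) :=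
    Measure.isProbabilityMeasure_map hW.aemeasurable
  have hstep2 : μ {ω | c * h₀ ω + s * I₂ ω ≤ g₀ ω}
      = ∫⁻ ω, ENNReal.ofReal (Real.exp (-(c * h₀ ω + s * I₂ ω))) ∂μ := by
    have h1 : μ {ω | c * h₀ ω + s * I₂ ω ≤ g₀ ω}
        = ((μ.map fun ω => (h₀ ω, I₂ ω)).prod (μ.map g₀))
            {q : (ℝ × ℝ) × ℝ | c * q.1.1 + s * q.1.2 ≤ q.2} := by
      rw [← hmap, Measure.map_apply (hW.prodMk hg) hSmeas]
      rfl
    rw [h1, Measure.prod_apply hSmeas]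
    have hae : ∀ᵐ x ∂(μ.map fun ω => (h₀ ω, I₂ ω)), 0 < x.1 ∧ 0 ≤ x.2 := by
      refine (ae_map_iff hW.aemeasurable ?_).2 ?_
      · exact (measurableSet_lt measurable_const measurable_fst).inter
          (measurableSet_le measurable_const measurable_snd)
      · filter_upwards [haeh] with ω hω
        exact ⟨hω, hInn ω⟩
    have h2 : ∫⁻ x, (μ.map g₀) (Prod.mk x ⁻¹' {q : (ℝ × ℝ) × ℝ | c * q.1.1 + s * q.1.2 ≤ q.2})
          ∂(μ.map fun ω => (h₀ ω, I₂ ω))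
        = ∫⁻ x, ENNReal.ofReal (Real.exp (-(c * x.1 + s * x.2)))
          ∂(μ.map fun ω => (h₀ ω, I₂ ω)) := by
      refine lintegral_congr_ae ?_
      filter_upwards [hae] with x hx
      have hpre : Prod.mk x ⁻¹' {q : (ℝ × ℝ) × ℝ | c * q.1.1 + s * q.1.2 ≤ q.2}
          = {y : ℝ | c * x.1 + s * x.2 ≤ y} := rfl
      rw [hpre, show {y : ℝ | c * x.1 + s * x.2 ≤ y} = Set.Ici (c * x.1 + s * x.2) from rfl,
        Measure.map_apply hg measurableSet_Ici]
      have hpre2 : g₀ ⁻¹' Set.Ici (c * x.1 + s * x.2) = {ω | c * x.1 + s * x.2 ≤ g₀ ω} := rfl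
      rw [hpre2, exp_tail_Ici μ g₀ hgexp _ (by nlinarith [hx.1, hx.2])]
    rw [h2, lintegral_map (show
          Measurable fun x : ℝ × ℝ => ENNReal.ofReal (Real.exp (-(c * x.1 + s * x.2))) from
        (((measurable_const.mul measurable_fst).add
        (measurable_const.mul measurable_snd)).neg.exp).ennreal_ofReal) hW]
  rw [hstep2]
  -- step 3 : convert to a Bochner integral
  have hstep3 : (∫⁻ ω, ENNReal.ofReal (Real.exp (-(c * h₀ ω + s * I₂ ω))) ∂μ).toReal
      = ∫ ω, Real.exp (-(c * h₀ ω + s * I₂ ω)) ∂μ := by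
    rw [integral_eq_lintegral_of_nonneg_ae
      (Filter.Eventually.of_forall fun ω => (Real.exp_pos _).le)
      ((show Measurable fun ω => Real.exp (-(c * h₀ ω + s * I₂ ω)) from
        ((measurable_const.mul hh).add (measurable_const.mul hI)).neg.exp).aestronglyMeasurable)]
  rw [hstep3]
  -- step 4 : factor the integral using independence of h₀ and I₂
  have hindephI : IndepFun h₀ I₂ μ := by
    have := hindep.indepFun (i := 1) (j := 2) (by decide)
    simpa using this
  have hcomp : IndepFun (fun ω => Real.exp (-(c * h₀ ω))) (fun ω => Real.exp (-(s * I₂ ω))) μ :=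
    hindephI.comp (φ := fun x : ℝ => Real.exp (-(c * x)))
      (ψ := fun x : ℝ => Real.exp (-(s * x)))
      ((measurable_const.mul measurable_id).neg.exp)
      ((measurable_const.mul measurable_id).neg.exp)
  have hfactor : ∫ ω, Real.exp (-(c * h₀ ω + s * I₂ ω)) ∂μ
      = (∫ ω, Real.exp (-(c * h₀ ω)) ∂μ) * ∫ ω, Real.exp (-(s * I₂ ω)) ∂μ := by
    rw [← hcomp.integral_fun_mul_eq_mul_integral ((measurable_const.mul hh).neg.exp.aestronglyMeasurable)
      ((measurable_const.mul hI).neg.exp.aestronglyMeasurable)]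
    congr 1
    ext ω
    rw [← Real.exp_add, neg_add]
  rw [hfactor, exp_laplace μ h₀ hh hhexp c hcnn, hIlap s hsnn]
  rw [hsdef, mul_comm K Γ, one_div_mul_eq_div]
end

section
/- Let γ(R) = h₀ / (R^α (K^{−1} g₀ + I₄)) where g₀, h₀ are independent Exp(1), I₄ is an independent shot noise with E[e^{−sI₄}] = exp(−λ C_α s^{2/α}), K > 0, R > 0 fixed. Then P(γ(R) ≥ Γ) = exp(−λ C_α Γ^{2/α} R²) / (Γ K^{−1} R^α + 1). -/
open MeasureTheory ProbabilityTheory Real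

open MeasureTheory ProbabilityTheory Real Set Filter Topology

lemma tail_Ici (ν : Measure ℝ) [IsProbabilityMeasure ν]
    (h : ∀ s : ℝ, 0 ≤ s → ν (Set.Ioi s) = ENNReal.ofReal (Real.exp (-s))) :
    ∀ t : ℝ, 0 ≤ t → ν (Set.Ici t) = ENNReal.ofReal (Real.exp (-t)) := by
  intro t ht
  rcases eq_or_lt_of_le ht with h0 | h0
  · subst h0
    have h1 : ν (Set.Ioi (0:ℝ)) = 1 := by simpa using h 0 le_rfl
    have h2 : (1:ENNReal) ≤ ν (Set.Ici (0:ℝ)) := h1 ▸ measure_mono Set.Ioi_subset_Ici_self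
    have h3 : ν (Set.Ici (0:ℝ)) ≤ 1 := prob_le_one
    simp [le_antisymm h3 h2]
  · have hint : Set.Ici t = ⋂ n : ℕ, Set.Ioi (t - ((n:ℝ)+1)⁻¹) := by
      ext x
      simp only [Set.mem_Ici, Set.mem_iInter, Set.mem_Ioi]
      constructor
      · intro hx n
        have : (0:ℝ) < ((n:ℝ)+1)⁻¹ := by positivity
        linarith
      · intro hx
        by_contra hlt
        push_neg at hlt
        obtain ⟨n, hn⟩ := exists_nat_one_div_lt (show (0:ℝ) < t - x by linarith)
        have := hx n
        rw [one_div] at hn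
        linarith
    have hAnti : Antitone (fun n : ℕ => Set.Ioi (t - ((n:ℝ)+1)⁻¹)) := by
      intro m n hmn
      apply Set.Ioi_subset_Ioi
      have : ((n:ℝ)+1)⁻¹ ≤ ((m:ℝ)+1)⁻¹ := by
        apply inv_anti₀ (by positivity)
        have : (m:ℝ) ≤ (n:ℝ) := Nat.cast_le.mpr hmn
        linarith
      linarith
    have htend : Tendsto (fun n : ℕ => ν (Set.Ioi (t - ((n:ℝ)+1)⁻¹))) atTop
        (𝓝 (ν (Set.Ici t))) := by
      rw [hint]
      exact tendsto_measure_iInter_atTop (fun n => (measurableSet_Ioi).nullMeasurableSet) hAnti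
        ⟨0, measure_ne_top ν _⟩
    have htend2 : Tendsto (fun n : ℕ => ν (Set.Ioi (t - ((n:ℝ)+1)⁻¹))) atTop
        (𝓝 (ENNReal.ofReal (Real.exp (-t)))) := by
      have hlim : Tendsto (fun n : ℕ => t - ((n:ℝ)+1)⁻¹) atTop (𝓝 t) := by
        have : Tendsto (fun n : ℕ => ((n:ℝ)+1)⁻¹) atTop (𝓝 0) := by
          simpa [one_div] using (tendsto_one_div_add_atTop_nhds_zero_nat : Tendsto (fun n : ℕ => 1 / ((n:ℝ) + 1)) atTop (𝓝 0))
        simpa using tendsto_const_nhds.sub this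
      have hcont : Tendsto (fun n : ℕ => ENNReal.ofReal (Real.exp (-(t - ((n:ℝ)+1)⁻¹)))) atTop
          (𝓝 (ENNReal.ofReal (Real.exp (-t)))) := by
        exact (ENNReal.continuous_ofReal.tendsto _).comp
          ((Real.continuous_exp.tendsto _).comp (hlim.neg))
      refine hcont.congr' ?_
      obtain ⟨N, hN⟩ := exists_nat_one_div_lt h0
      filter_upwards [eventually_ge_atTop N] with n hn
      have h1 : ((n:ℝ)+1)⁻¹ ≤ ((N:ℝ)+1)⁻¹ := by
        apply inv_anti₀ (by positivity)
        have : (N:ℝ) ≤ (n:ℝ) := Nat.cast_le.mpr hn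
        linarith
      have h2 : ((N:ℝ)+1)⁻¹ < t := by rwa [one_div] at hN
      exact (h _ (by linarith)).symm
    exact tendsto_nhds_unique htend htend2

lemma map_eq_expDist (ν : Measure ℝ) [IsProbabilityMeasure ν]
    (h : ∀ s : ℝ, 0 ≤ s → ν (Set.Ioi s) = ENNReal.ofReal (Real.exp (-s))) :
    ν = (volume.restrict (Set.Ioi 0)).withDensity
      (fun x => ENNReal.ofReal (Real.exp (-x))) := by
  have hIci := tail_Ici ν h
  refine MeasureTheory.Measure.ext_of_Ici ν _ (fun c => ?_)
  rw [withDensity_apply _ measurableSet_Ici, Measure.restrict_restrict measurableSet_Ici]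
  have hinteg : ∀ u : ℝ, IntegrableOn (fun x => Real.exp (-x)) (Set.Ioi u) := by
    intro u
    have := exp_neg_integrableOn_Ioi u (zero_lt_one)
    simpa using this
  rcases le_or_gt c 0 with hc | hc
  · have hs : Set.Ici c ∩ Set.Ioi 0 = Set.Ioi (0:ℝ) := by
      ext x
      simp only [Set.mem_inter_iff, Set.mem_Ici, Set.mem_Ioi, and_iff_right_iff_imp]
      intro hx; linarith
    have h1 : ν (Set.Ici c) = 1 := by
      have hν0 : ν (Set.Ioi (0:ℝ)) = 1 := by simpa using h 0 le_rfl
      refine le_antisymm prob_le_one ?_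
      calc (1:ENNReal) = ν (Set.Ioi 0) := hν0.symm
        _ ≤ ν (Set.Ici c) := measure_mono (fun x hx => le_trans hc (le_of_lt hx))
    rw [h1, hs, ← ofReal_integral_eq_lintegral_ofReal (hinteg 0)
      (ae_of_all _ (fun x => (Real.exp_pos _).le))]
    rw [integral_exp_neg_Ioi]
    simp
  · have hs : Set.Ici c ∩ Set.Ioi 0 = Set.Ici c := by
      ext x
      simp only [Set.mem_inter_iff, Set.mem_Ici, Set.mem_Ioi, and_iff_left_iff_imp]
      intro hx; linarith
    rw [hIci c hc.le, hs]
    have : ∫⁻ x in Set.Ici c, ENNReal.ofReal (Real.exp (-x)) =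
        ∫⁻ x in Set.Ioi c, ENNReal.ofReal (Real.exp (-x)) :=
      (setLIntegral_congr MeasureTheory.Ioi_ae_eq_Ici).symm
    rw [this, ← ofReal_integral_eq_lintegral_ofReal (hinteg c)
      (ae_of_all _ (fun x => (Real.exp_pos _).le)), integral_exp_neg_Ioi]

lemma exp_moment {Ω : Type*} [MeasurableSpace Ω] (μ : Measure Ω) [IsProbabilityMeasure μ]
    (g : Ω → ℝ) (hg : Measurable g)
    (hgexp : ∀ s : ℝ, 0 ≤ s → μ {ω | s < g ω} = ENNReal.ofReal (Real.exp (-s)))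
    (a : ℝ) (ha : 0 ≤ a) :
    ∫ ω, Real.exp (-(a * g ω)) ∂μ = (a + 1)⁻¹ := by
  haveI : IsProbabilityMeasure (μ.map g) := Measure.isProbabilityMeasure_map hg.aemeasurable
  have hmap : μ.map g = (volume.restrict (Set.Ioi 0)).withDensity
      (fun x => ENNReal.ofReal (Real.exp (-x))) := by
    apply map_eq_expDist
    intro s hs
    rw [Measure.map_apply hg measurableSet_Ioi]
    exact hgexp s hs
  have h1 : ∫ ω, Real.exp (-(a * g ω)) ∂μ = ∫ x, Real.exp (-(a * x)) ∂(μ.map g) := by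
    rw [integral_map hg.aemeasurable]
    exact (Measurable.aestronglyMeasurable (by fun_prop))
  rw [h1, hmap]
  have hdens : (fun x : ℝ => ENNReal.ofReal (Real.exp (-x))) =
      fun x : ℝ => ((Real.toNNReal (Real.exp (-x)) : NNReal) : ENNReal) := rfl
  rw [hdens, integral_withDensity_eq_integral_smul (by fun_prop)]
  have h2 : ∀ x : ℝ, (Real.toNNReal (Real.exp (-x))) • Real.exp (-(a * x)) =
      Real.exp (-((a+1) * x)) := by
    intro x
    rw [NNReal.smul_def, Real.coe_toNNReal _ (Real.exp_pos _).le, smul_eq_mul,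
      ← Real.exp_add]
    ring_nf
  simp_rw [h2]
  have := integral_comp_mul_left_Ioi (fun y => Real.exp (-y)) 0 (show (0:ℝ) < a + 1 by linarith)
  simp only [mul_zero] at this
  rw [this, integral_exp_neg_Ioi]
  simp

/-- Per-location SIR CCDF for an open-access cellular user:
`γ(R) = h₀ / (R^α (K⁻¹ g₀ + I₄))` with `g₀, h₀ ~ Exp(1)` and shot noise `I₄`,
all mutually independent, has
`P(γ(R) ≥ Γ) = exp(−λ C_α Γ^{2/α} R²) / (Γ K⁻¹ R^α + 1)`. -/
theorem sir_ccdf_open_access {Ω : Type*} [MeasurableSpace Ω] (μ : Measure Ω)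
    [IsProbabilityMeasure μ]
    (g₀ h₀ I₄ : Ω → ℝ) (hg : Measurable g₀) (hh : Measurable h₀) (hI : Measurable I₄)
    (hindep : iIndepFun (m := fun _ : Fin 3 => Real.measurableSpace) ![g₀, h₀, I₄] μ)
    (hgexp : ∀ s : ℝ, 0 ≤ s → μ {ω | s < g₀ ω} = ENNReal.ofReal (Real.exp (-s)))
    (hhexp : ∀ s : ℝ, 0 ≤ s → μ {ω | s < h₀ ω} = ENNReal.ofReal (Real.exp (-s)))
    (lam α K R : ℝ) (hlam : 0 < lam) (hα : 2 < α) (hK : 0 < K) (hR : 0 < R)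
    (hInn : ∀ ω, 0 ≤ I₄ ω)
    (hIlap : ∀ s : ℝ, 0 ≤ s →
      ∫ ω, Real.exp (-(s * I₄ ω)) ∂μ =
        Real.exp (-(lam * (2 * π ^ 2 / α * (Real.sin (2 * π / α))⁻¹) * s ^ (2 / α))))
    (Γ : ℝ) (hΓ : 0 ≤ Γ) :
    (μ {ω | Γ ≤ h₀ ω / (R ^ α * (K⁻¹ * g₀ ω + I₄ ω))}).toReal =
      Real.exp (-(lam * (2 * π ^ 2 / α * (Real.sin (2 * π / α))⁻¹) * Γ ^ (2 / α) * R ^ 2)) /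
        (Γ * K⁻¹ * R ^ α + 1) := by
  set C := lam * (2 * π ^ 2 / α * (Real.sin (2 * π / α))⁻¹) with hC
  have hRα : (0:ℝ) < R ^ α := Real.rpow_pos_of_pos hR α
  set a := Γ * R ^ α * K⁻¹ with ha
  set b := Γ * R ^ α with hb
  have hK' : (0:ℝ) < K⁻¹ := by positivity
  have ha0 : 0 ≤ a := by positivity
  have hb0 : 0 ≤ b := by positivity
  -- a.e. positivity of g₀
  have hgpos : ∀ᵐ ω ∂μ, 0 < g₀ ω := by
    have h1 : μ {ω | 0 < g₀ ω} = 1 := by simpa using hgexp 0 le_rfl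
    have hms : MeasurableSet {ω | 0 < g₀ ω} := hg measurableSet_Ioi
    rw [ae_iff]
    have : {ω | ¬ 0 < g₀ ω} = {ω | 0 < g₀ ω}ᶜ := rfl
    rw [this, measure_compl hms (measure_ne_top μ _), h1, measure_univ, tsub_self]
  -- the transformed threshold
  set T : Ω → ℝ := fun ω => Γ * (R ^ α * (K⁻¹ * g₀ ω + I₄ ω)) with hT
  have hTmeas : Measurable T := by fun_prop
  have hTnn : ∀ᵐ ω ∂μ, 0 ≤ T ω := by
    filter_upwards [hgpos] with ω hω
    have := hInn ω
    positivity
  -- set equality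
  have hset : μ {ω | Γ ≤ h₀ ω / (R ^ α * (K⁻¹ * g₀ ω + I₄ ω))} = μ {ω | T ω ≤ h₀ ω} := by
    apply measure_congr
    filter_upwards [hgpos] with ω hω
    have hD : 0 < R ^ α * (K⁻¹ * g₀ ω + I₄ ω) := by
      have := hInn ω
      positivity
    have : (Γ ≤ h₀ ω / (R ^ α * (K⁻¹ * g₀ ω + I₄ ω))) = (T ω ≤ h₀ ω) := by
      rw [eq_iff_iff, le_div_iff₀ hD]
    exact this
  rw [hset]
  -- independence of the pair (g₀, I₄) with h₀
  have hmeasall : ∀ i, Measurable (![g₀, h₀, I₄] i) := by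
    intro i; fin_cases i <;> assumption
  have hpair : IndepFun (fun ω => (g₀ ω, I₄ ω)) h₀ μ := by
    have := hindep.indepFun_prodMk hmeasall 0 2 1 (by decide) (by decide)
    simpa using this
  have hTh : IndepFun T h₀ μ := by
    have hφ : Measurable (fun p : ℝ × ℝ => Γ * (R ^ α * (K⁻¹ * p.1 + p.2))) := by fun_prop
    exact hpair.comp hφ measurable_id
  haveI : IsProbabilityMeasure (μ.map h₀) := Measure.isProbabilityMeasure_map hh.aemeasurable
  haveI : IsProbabilityMeasure (μ.map T) := Measure.isProbabilityMeasure_map hTmeas.aemeasurable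
  have hprod := (indepFun_iff_map_prod_eq_prod_map_map hTmeas.aemeasurable
    hh.aemeasurable).mp hTh
  have hle : MeasurableSet {p : ℝ × ℝ | p.1 ≤ p.2} :=
    measurableSet_le measurable_fst measurable_snd
  have hstep : μ {ω | T ω ≤ h₀ ω} = ∫⁻ x, (μ.map h₀) (Set.Ici x) ∂(μ.map T) := by
    have h1 : μ {ω | T ω ≤ h₀ ω}
        = (μ.map (fun ω => (T ω, h₀ ω))) {p : ℝ × ℝ | p.1 ≤ p.2} := by
      rw [Measure.map_apply (hTmeas.prodMk hh) hle]
      rfl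
    rw [h1, hprod, Measure.prod_apply hle]
    rfl
  rw [hstep]
  -- tail of h₀
  have hhtail : ∀ t : ℝ, 0 ≤ t → (μ.map h₀) (Set.Ici t) = ENNReal.ofReal (Real.exp (-t)) := by
    apply tail_Ici
    intro s hs
    rw [Measure.map_apply hh measurableSet_Ioi]
    exact hhexp s hs
  have hTnn' : ∀ᵐ x ∂(μ.map T), 0 ≤ x := by
    rw [MeasureTheory.ae_map_iff hTmeas.aemeasurable measurableSet_Ici]
    exact hTnn
  have hstep2 : ∫⁻ x, (μ.map h₀) (Set.Ici x) ∂(μ.map T)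
      = ∫⁻ x, ENNReal.ofReal (Real.exp (-x)) ∂(μ.map T) := by
    apply lintegral_congr_ae
    filter_upwards [hTnn'] with x hx
    exact hhtail x hx
  rw [hstep2, lintegral_map (by fun_prop) hTmeas]
  -- the two exponential factors
  set X : Ω → ℝ := fun ω => Real.exp (-(a * g₀ ω)) with hX
  set Y : Ω → ℝ := fun ω => Real.exp (-(b * I₄ ω)) with hY
  have hXY : ∀ ω, Real.exp (-(T ω)) = X ω * Y ω := by
    intro ω
    rw [hX, hY, ← Real.exp_add]
    congr 1
    simp only [hT, ha, hb]
    ring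
  have hXmeas : Measurable X := by fun_prop
  have hYmeas : Measurable Y := by fun_prop
  have hXint : Integrable X μ := by
    refine (integrable_const (1:ℝ)).mono' hXmeas.aestronglyMeasurable ?_
    filter_upwards [hgpos] with ω hω
    rw [Real.norm_eq_abs, abs_of_pos (Real.exp_pos _)]
    exact Real.exp_le_one_iff.mpr (by nlinarith)
  have hYint : Integrable Y μ := by
    refine (integrable_const (1:ℝ)).mono' hYmeas.aestronglyMeasurable ?_
    refine Filter.Eventually.of_forall (fun ω => ?_)
    rw [Real.norm_eq_abs, abs_of_pos (Real.exp_pos _)]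
    exact Real.exp_le_one_iff.mpr (by nlinarith [hInn ω])
  have hXYint : Integrable (fun ω => X ω * Y ω) μ := by
    refine (integrable_const (1:ℝ)).mono' (hXmeas.mul hYmeas).aestronglyMeasurable ?_
    filter_upwards [hgpos] with ω hω
    rw [Real.norm_eq_abs, abs_of_pos (by positivity : (0:ℝ) < X ω * Y ω)]
    have h1 : X ω ≤ 1 := Real.exp_le_one_iff.mpr (by nlinarith)
    have h2 : Y ω ≤ 1 := Real.exp_le_one_iff.mpr (by nlinarith [hInn ω])
    nlinarith [Real.exp_pos (-(a * g₀ ω)), Real.exp_pos (-(b * I₄ ω))]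
  have hTint : Integrable (fun ω => Real.exp (-(T ω))) μ := by
    simpa only [hXY] using hXYint
  have hofReal : ∫⁻ ω, ENNReal.ofReal (Real.exp (-(T ω))) ∂μ
      = ENNReal.ofReal (∫ ω, Real.exp (-(T ω)) ∂μ) :=
    (MeasureTheory.ofReal_integral_eq_lintegral_ofReal hTint
      (Filter.Eventually.of_forall (fun ω => (Real.exp_pos _).le))).symm
  rw [hofReal]
  -- split the integral by independence
  have hgI : IndepFun g₀ I₄ μ := by
    have := hindep.indepFun (i := 0) (j := 2) (by decide)
    simpa using this
  have hXYindep : IndepFun X Y μ := by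
    exact hgI.comp (by fun_prop : Measurable (fun x : ℝ => Real.exp (-(a * x))))
      (by fun_prop : Measurable (fun x : ℝ => Real.exp (-(b * x))))
  have hsplit : ∫ ω, Real.exp (-(T ω)) ∂μ = (∫ ω, X ω ∂μ) * ∫ ω, Y ω ∂μ := by
    calc ∫ ω, Real.exp (-(T ω)) ∂μ = ∫ ω, X ω * Y ω ∂μ := by simp only [hXY]
      _ = (∫ ω, X ω ∂μ) * ∫ ω, Y ω ∂μ :=
        hXYindep.integral_mul_eq_mul_integral hXmeas.aestronglyMeasurable hYmeas.aestronglyMeasurable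
  have hEX : ∫ ω, X ω ∂μ = (a + 1)⁻¹ := exp_moment μ g₀ hg hgexp a ha0
  have hEY : ∫ ω, Y ω ∂μ = Real.exp (-(C * b ^ (2 / α))) := hIlap b hb0
  rw [hsplit, hEX, hEY]
  -- final arithmetic
  have hα0 : α ≠ 0 := by linarith
  have hbrpow : b ^ (2 / α) = Γ ^ (2 / α) * R ^ 2 := by
    rw [hb, Real.mul_rpow hΓ hRα.le, ← Real.rpow_mul hR.le]
    have h2 : α * (2 / α) = 2 := by field_simp
    rw [h2, show ((2:ℝ)) = ((2:ℕ):ℝ) by norm_num, Real.rpow_natCast]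
  rw [ENNReal.toReal_ofReal (by positivity), hbrpow, ha, hb]
  rw [show -(C * (Γ ^ (2 / α) * R ^ 2)) = -(C * Γ ^ (2 / α) * R ^ 2) by ring]
  rw [div_eq_mul_inv, mul_comm]
  ring_nf
end

section
/- Suppose P(γ(R) ≥ Γ) = e^{−λ C (KΓ)^{2/α}} / (ΓK R^{−α} + 1) for each R, and R is uniformly distributed on the annulus with inner radius R_i and outer radius R_f > R_i (so its density is f(r) = 2r/(R_f² − R_i²) on [R_i, R_f]). Then E_R[P(γ(R) ≤ Γ)] = 1 − (e^{−λC(KΓ)^{2/α}}/(R_f² − R_i²)) · ( R_f² − R_i² + R_i² ₂F₁(2/α, 1; 1+2/α; −R_i^α/(KΓ)) − R_f² ₂F₁(2/α, 1; 1+2/α; −R_f^α/(KΓ)) ). -/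
open Real

section Aux

open MeasureTheory Set

-- Pfaff-type substitution: the involution w ↦ (1-w)/(1+l*w) on (0,1)
lemma pfaff (a l : ℝ) (hl : 0 < l) :
    ∫ u in Ioo (0:ℝ) 1, (1-u) ^ (a-1) * (1+l*u) ^ (-a)
      = ∫ w in Ioo (0:ℝ) 1, w ^ (a-1) * (1+l*w)⁻¹ := by
  set f : ℝ → ℝ := fun w => (1-w)/(1+l*w) with hf
  have hden : ∀ w : ℝ, w ∈ Ioo (0:ℝ) 1 → 0 < 1 + l*w := by
    intro w hw
    have := mul_pos hl hw.1
    linarith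
  have hmem : ∀ w ∈ Ioo (0:ℝ) 1, f w ∈ Ioo (0:ℝ) 1 := by
    intro w hw
    have h1 := hden w hw
    constructor
    · exact div_pos (by linarith [hw.2]) h1
    · rw [div_lt_one h1]
      nlinarith [hw.1, mul_pos hl hw.1]
  have hinv : ∀ w ∈ Ioo (0:ℝ) 1, f (f w) = w := by
    intro w hw
    have h1 := hden w hw
    have h2 := hden (f w) (hmem w hw)
    simp only [hf] at h2 ⊢
    rw [div_eq_iff (ne_of_gt h2)]
    linear_combination -(div_mul_cancel₀ (1-w) (ne_of_gt h1))
  have himg : f '' Ioo (0:ℝ) 1 = Ioo (0:ℝ) 1 := by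
    apply Subset.antisymm
    · rintro _ ⟨w, hw, rfl⟩; exact hmem w hw
    · intro u hu
      exact ⟨f u, hmem u hu, hinv u hu⟩
  have hinj : InjOn f (Ioo (0:ℝ) 1) := by
    intro x hx y hy hxy
    rw [← hinv x hx, ← hinv y hy, hxy]
  have hder : ∀ w ∈ Ioo (0:ℝ) 1,
      HasDerivWithinAt f (-(1+l) / (1+l*w)^2) (Ioo (0:ℝ) 1) w := by
    intro w hw
    have h1 := hden w hw
    have hnum : HasDerivAt (fun w : ℝ => 1 - w) (-1) w := by
      simpa using ((hasDerivAt_id w).const_sub 1)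
    have hd2 : HasDerivAt (fun w : ℝ => 1 + l * w) l w := by
      simpa using (((hasDerivAt_id w).const_mul l).const_add 1)
    have : HasDerivAt f ((-1 * (1+l*w) - (1-w)*l)/(1+l*w)^2) w :=
      hnum.div hd2 (ne_of_gt h1)
    exact (this.congr_deriv (by ring)).hasDerivWithinAt
  calc ∫ u in Ioo (0:ℝ) 1, (1-u) ^ (a-1) * (1+l*u) ^ (-a)
      = ∫ u in f '' Ioo (0:ℝ) 1, (1-u) ^ (a-1) * (1+l*u) ^ (-a) := by rw [himg]
    _ = ∫ w in Ioo (0:ℝ) 1, |(-(1+l) / (1+l*w)^2)| •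
          ((1 - f w) ^ (a-1) * (1+l*(f w)) ^ (-a)) := by
        exact integral_image_eq_integral_abs_deriv_smul measurableSet_Ioo hder hinj _
    _ = ∫ w in Ioo (0:ℝ) 1, w ^ (a-1) * (1+l*w)⁻¹ := by
        apply setIntegral_congr_fun measurableSet_Ioo
        intro w hw
        have h1 := hden w hw
        have hL : (0:ℝ) < 1 + l := by linarith
        have e1 : 1 - f w = (1+l)*w / (1+l*w) := by
          simp only [hf]; rw [eq_div_iff (ne_of_gt h1), sub_mul, div_mul_cancel₀ _ (ne_of_gt h1)]; ring
        have e2 : 1 + l * f w = (1+l) / (1+l*w) := by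
          simp only [hf]; field_simp; ring
        have habs : |(-(1+l) / (1+l*w)^2)| = (1+l) / (1+l*w)^2 := by
          rw [abs_div, abs_neg, abs_of_pos hL, abs_of_pos (by positivity)]
        simp only [smul_eq_mul]
        rw [e1, e2, habs]
        have hw0 : 0 < w := hw.1
        have hLt : (0:ℝ) < (1+l)/(1+l*w) := div_pos hL h1
        rw [show (1+l)*w / (1+l*w) = w * ((1+l)/(1+l*w)) by ring,
          Real.mul_rpow (le_of_lt hw0) (le_of_lt hLt)]
        have e3 : ((1+l)/(1+l*w)) ^ (a-1) * ((1+l)/(1+l*w)) ^ (-a) = (1+l*w)/(1+l) := by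
          rw [← Real.rpow_add hLt, show a-1 + -a = -1 by ring, Real.rpow_neg_one, inv_div]
        rw [mul_assoc (w ^ (a-1)), e3]
        field_simp

lemma subst_radial (α P R : ℝ) (hα : 0 < α) (hP : 0 < P) (hR : 0 < R) :
    ∫ r in Ioo (0:ℝ) R, 2*r*P/(P + r^α)
      = R^2 * ((2/α) * ∫ w in Ioo (0:ℝ) 1, w^(2/α-1) * (1 + (R^α/P)*w)⁻¹) := by
  set f : ℝ → ℝ := fun w => R * w^(1/α) with hf
  have himg : f '' Ioo (0:ℝ) 1 = Ioo (0:ℝ) R := by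
    apply Subset.antisymm
    · rintro _ ⟨w, hw, rfl⟩
      constructor
      · exact mul_pos hR (Real.rpow_pos_of_pos hw.1 _)
      · have : w ^ (1/α) < 1 :=
          Real.rpow_lt_one (le_of_lt hw.1) hw.2 (by positivity)
        calc R * w^(1/α) < R * 1 := by
              exact mul_lt_mul_of_pos_left this hR
          _ = R := mul_one R
    · intro r hr
      refine ⟨(r/R)^α, ⟨Real.rpow_pos_of_pos (div_pos hr.1 hR) _,
        Real.rpow_lt_one (le_of_lt (div_pos hr.1 hR)) ((div_lt_one hR).2 hr.2) hα⟩, ?_⟩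
      simp only [hf]
      rw [← Real.rpow_mul (le_of_lt (div_pos hr.1 hR)),
        mul_one_div_cancel (ne_of_gt hα), Real.rpow_one]
      field_simp
  have hinj : InjOn f (Ioo (0:ℝ) 1) := by
    intro x hx y hy hxy
    simp only [hf] at hxy
    have h1 : x ^ (1/α) = y ^ (1/α) := mul_left_cancel₀ (ne_of_gt hR) hxy
    have h2 : (x ^ (1/α)) ^ α = (y ^ (1/α)) ^ α := by rw [h1]
    rwa [← Real.rpow_mul (le_of_lt hx.1), ← Real.rpow_mul (le_of_lt hy.1),
      one_div_mul_cancel (ne_of_gt hα), Real.rpow_one, Real.rpow_one] at h2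
  have hder : ∀ w ∈ Ioo (0:ℝ) 1,
      HasDerivWithinAt f (R * (1/α * w^(1/α - 1))) (Ioo (0:ℝ) 1) w := by
    intro w hw
    exact ((Real.hasDerivAt_rpow_const (Or.inl (ne_of_gt hw.1))).const_mul
      R).hasDerivWithinAt
  calc ∫ r in Ioo (0:ℝ) R, 2*r*P/(P + r^α)
      = ∫ r in f '' Ioo (0:ℝ) 1, 2*r*P/(P + r^α) := by rw [himg]
    _ = ∫ w in Ioo (0:ℝ) 1, |R * (1/α * w^(1/α - 1))| •
          (2*(f w)*P/(P + (f w)^α)) := by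
        exact integral_image_eq_integral_abs_deriv_smul measurableSet_Ioo hder hinj _
    _ = ∫ w in Ioo (0:ℝ) 1, R^2 * ((2/α) * (w^(2/α-1) * (1 + (R^α/P)*w)⁻¹)) := by
        apply setIntegral_congr_fun measurableSet_Ioo
        intro w hw
        simp only [smul_eq_mul]
        have hw0 : 0 < w := hw.1
        have habs : |R * (1/α * w^(1/α - 1))| = R * (1/α * w^(1/α - 1)) := by
          rw [abs_of_pos]
          have := Real.rpow_pos_of_pos hw0 (1/α - 1)
          positivity
        have hfw : (f w) ^ α = R^α * w := by
          simp only [hf]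
          rw [Real.mul_rpow (le_of_lt hR) (le_of_lt (Real.rpow_pos_of_pos hw0 _)),
            ← Real.rpow_mul (le_of_lt hw0), one_div_mul_cancel (ne_of_gt hα),
            Real.rpow_one]
        have hsum : 0 < P + R^α * w := by
          have := Real.rpow_pos_of_pos hR α
          positivity
        have hinvp : (1 + (R^α/P)*w)⁻¹ = P / (P + R^α*w) := by
          have h1 : 0 < 1 + R^α/P*w := by
            have := Real.rpow_pos_of_pos hR α
            positivity
          rw [eq_div_iff (ne_of_gt hsum), inv_mul_eq_div, div_eq_iff (ne_of_gt h1)]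
          field_simp
        have hexp : w^(1/α - 1) * w^(1/α) = w^(2/α-1) := by
          rw [← Real.rpow_add hw0]; ring_nf
        rw [habs, hfw, hinvp, ← hexp]
        simp only [hf]
        field_simp
    _ = R^2 * ((2/α) * ∫ w in Ioo (0:ℝ) 1, w^(2/α-1) * (1 + (R^α/P)*w)⁻¹) := by
        rw [integral_const_mul, integral_const_mul]

lemma hyper_eq (a l : ℝ) (ha : 0 < a) :
    gaussHypergeometric a 1 (1+a) (-l)
      = a * ∫ u in (0:ℝ)..1, (1-u)^(a-1) * (1+l*u)^(-a) := by
  unfold gaussHypergeometric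
  have hg : Real.Gamma (1+a) / (Real.Gamma 1 * Real.Gamma (1+a-1)) = a := by
    rw [show (1:ℝ)+a-1 = a by ring, Real.Gamma_one, add_comm,
      Real.Gamma_add_one (ne_of_gt ha), one_mul]
    field_simp [ne_of_gt (Real.Gamma_pos_of_pos ha)]
  rw [hg]
  congr 1
  apply intervalIntegral.integral_congr
  intro u hu
  simp only
  rw [show (1:ℝ)-1 = 0 by ring, Real.rpow_zero, one_mul,
    show (1:ℝ)+a-1-1 = a-1 by ring, show 1 - (-l)*u = 1 + l*u by ring]

end Aux

section Main

open MeasureTheory Set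

/-- Lemma 2 (closed access): averaging the conditional SIR CDF
`1 − e^{−λC(KΓ)^{2/α}}/(ΓK r^{−α}+1)` over a uniform radius on the annulus `[R_i, R_f]`
yields the closed-form hypergeometric expression. -/
theorem avg_sir_cdf_closed_access (lam C K α Γ R_i R_f : ℝ)
    (hlam : 0 < lam) (hC : 0 < C) (hK : 0 < K) (hα : 0 < α) (hΓ : 0 < Γ)
    (hRi : 0 < R_i) (hRf : R_i < R_f) :
    ∫ r in R_i..R_f,
        (1 - Real.exp (-(lam * C * (K * Γ) ^ (2 / α))) / (Γ * K * r ^ (-α) + 1)) *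
          (2 * r / (R_f ^ 2 - R_i ^ 2)) =
      1 - Real.exp (-(lam * C * (K * Γ) ^ (2 / α))) / (R_f ^ 2 - R_i ^ 2) *
        (R_f ^ 2 - R_i ^ 2 +
          R_i ^ 2 * gaussHypergeometric (2 / α) 1 (1 + 2 / α) (-(R_i ^ α / (K * Γ))) -
          R_f ^ 2 * gaussHypergeometric (2 / α) 1 (1 + 2 / α) (-(R_f ^ α / (K * Γ)))) := by
  set E := Real.exp (-(lam * C * (K * Γ) ^ (2 / α))) with hE
  set D := R_f ^ 2 - R_i ^ 2 with hD
  have hDpos : 0 < D := by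
    have : R_i ^ 2 < R_f ^ 2 := by nlinarith
    simp [hD]; nlinarith
  have hP : 0 < K * Γ := mul_pos hK hΓ
  -- the hypergeometric identity: for R > 0,
  -- R^2 * ₂F₁(2/α,1;1+2/α;-(R^α/(KΓ))) = ∫_0^R 2 r KΓ/(KΓ + r^α) dr
  have hH : ∀ R : ℝ, 0 < R →
      R^2 * gaussHypergeometric (2/α) 1 (1+2/α) (-(R^α/(K*Γ)))
        = ∫ r in (0:ℝ)..R, 2*r*(K*Γ)/(K*Γ + r^α) := by
    intro R hR
    have hl : 0 < R^α/(K*Γ) := div_pos (Real.rpow_pos_of_pos hR α) hP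
    rw [hyper_eq (2/α) (R^α/(K*Γ)) (by positivity)]
    rw [intervalIntegral.integral_of_le zero_le_one, integral_Ioc_eq_integral_Ioo,
      pfaff (2/α) (R^α/(K*Γ)) hl]
    rw [intervalIntegral.integral_of_le (le_of_lt hR), integral_Ioc_eq_integral_Ioo,
      subst_radial α (K*Γ) R hα hP hR]
  -- continuity of the main rational kernel on [0, ∞)
  have hrpow : Continuous fun r : ℝ => r ^ α :=
    continuous_iff_continuousAt.mpr fun x ↦
      Real.continuousAt_rpow_const x α (Or.inr (le_of_lt hα))
  have hker : ∀ s : Set ℝ, s ⊆ Ici (0:ℝ) →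
      ContinuousOn (fun r : ℝ => 2*r*(K*Γ)/(K*Γ + r^α)) s := by
    intro s hs
    apply ContinuousOn.div
    · exact Continuous.continuousOn (by continuity)
    · exact (continuous_const.add hrpow).continuousOn
    · intro x hx
      have hx0 : 0 ≤ x := hs hx
      have : 0 ≤ x ^ α := Real.rpow_nonneg hx0 α
      positivity
  have hint : ∀ a b : ℝ, 0 ≤ a → 0 ≤ b →
      IntervalIntegrable (fun r : ℝ => 2*r*(K*Γ)/(K*Γ + r^α)) volume a b := by
    intro a b ha hb
    apply ContinuousOn.intervalIntegrable
    apply hker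
    intro x hx
    rcases le_total a b with h | h
    · rw [uIcc_of_le h] at hx; exact le_trans ha hx.1
    · rw [uIcc_of_ge h] at hx; exact le_trans hb hx.1
  -- rewrite the integrand on [R_i, R_f]
  have hRf0 : 0 < R_f := lt_trans hRi hRf
  have hcongr : ∀ r ∈ uIcc R_i R_f,
      (1 - E / (Γ * K * r ^ (-α) + 1)) * (2 * r / D)
        = 2*r/D - E/D*(2*r) + E/D * (2*r*(K*Γ)/(K*Γ + r^α)) := by
    intro r hr
    rw [uIcc_of_le (le_of_lt hRf)] at hr
    have hr0 : 0 < r := lt_of_lt_of_le hRi hr.1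
    have hx : 0 < r ^ α := Real.rpow_pos_of_pos hr0 α
    rw [Real.rpow_neg (le_of_lt hr0)]
    have hden : Γ * K * (r^α)⁻¹ + 1 = (Γ*K + r^α) / r^α := by
      field_simp
    have h1 : Γ*K + r^α ≠ 0 := by positivity
    have h2 : K*Γ + r^α ≠ 0 := by positivity
    rw [hden, div_div_eq_mul_div]
    field_simp
    ring
  rw [intervalIntegral.integral_congr hcongr]
  have hi1 : IntervalIntegrable (fun r : ℝ => 2*r/D) volume R_i R_f :=
    Continuous.intervalIntegrable (by continuity) R_i R_f
  have hi2 : IntervalIntegrable (fun r : ℝ => E/D*(2*r)) volume R_i R_f :=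
    Continuous.intervalIntegrable (by continuity) R_i R_f
  have hi3 : IntervalIntegrable (fun r : ℝ => E/D * (2*r*(K*Γ)/(K*Γ + r^α)))
      volume R_i R_f :=
    (hint R_i R_f (le_of_lt hRi) (le_of_lt hRf0)).const_mul (E/D)
  rw [intervalIntegral.integral_add (hi1.sub hi2) hi3,
    intervalIntegral.integral_sub hi1 hi2]
  have hsq : ∀ a b : ℝ, (∫ r in a..b, 2*r) = b^2 - a^2 := by
    intro a b
    have hder : ∀ x ∈ uIcc a b, HasDerivAt (fun x : ℝ => x^2) (2*x) x := by
      intro x _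
      simpa using hasDerivAt_pow 2 x
    rw [intervalIntegral.integral_eq_sub_of_hasDerivAt hder
      (Continuous.intervalIntegrable (by continuity) a b)]
  have e1 : (∫ r in R_i..R_f, 2*r/D) = (R_f^2 - R_i^2)/D := by
    rw [intervalIntegral.integral_div, hsq]
  have e2 : (∫ r in R_i..R_f, E/D*(2*r)) = E/D*(R_f^2 - R_i^2) := by
    rw [intervalIntegral.integral_const_mul, hsq]
  have e3 : (∫ r in R_i..R_f, E/D * (2*r*(K*Γ)/(K*Γ + r^α)))
      = E/D * ((∫ r in (0:ℝ)..R_f, 2*r*(K*Γ)/(K*Γ + r^α))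
          - (∫ r in (0:ℝ)..R_i, 2*r*(K*Γ)/(K*Γ + r^α))) := by
    rw [intervalIntegral.integral_const_mul]
    congr 1
    have hadd := intervalIntegral.integral_add_adjacent_intervals
      (hint 0 R_i le_rfl (le_of_lt hRi)) (hint R_i R_f (le_of_lt hRi) (le_of_lt hRf0))
    linarith [hadd]
  rw [e1, e2, e3, ← hH R_i hRi, ← hH R_f hRf0]
  field_simp
  ring

end Main
end

section
/- For y < 0, z > 0 and x ≥ 0, ∫₀^x e^{yt}/(z t² + 1) dt = (1/√z)[ (−Re Ei(iw) + Re Ei(xy + iw)) sin w + (Im Ei(iw) − Im Ei(xy + iw)) cos w ], where w = y/√z and Ei is the exponential integral function. -/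
open Real Complex

/-- The exponential integral `Ei`, analytically continued to the complex plane
(principal branch): `Ei(z) = γ + log z + Σ_{n≥1} zⁿ/(n·n!)`. -/
noncomputable def expIntegralEi (z : ℂ) : ℂ :=
  (Real.eulerMascheroniConstant : ℂ) + Complex.log z +
    ∑' n : ℕ, z ^ (n + 1) / (((n : ℂ) + 1) * ((Nat.factorial (n + 1) : ℕ) : ℂ))

lemma expIntegralEi_hasDerivAt {u : ℂ} (hu : u.im ≠ 0) :
    HasDerivAt expIntegralEi (Complex.exp u / u) u := by
  have hu0 : u ≠ 0 := fun h => hu (by simp [h])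
  have hslit : u ∈ Complex.slitPlane := Or.inr hu
  set R : ℝ := ‖u‖ + 1 with hR
  have hRpos : 0 < R := by positivity
  have hbnd : Summable (fun n : ℕ => R ^ n / (n.factorial : ℝ)) :=
    Real.summable_pow_div_factorial R
  have hS : HasDerivAt (fun v : ℂ => ∑' n : ℕ,
      v ^ (n + 1) / (((n : ℂ) + 1) * ((Nat.factorial (n + 1) : ℕ) : ℂ)))
      (∑' n : ℕ, u ^ n / ((Nat.factorial (n+1) : ℕ) : ℂ)) u := by
    apply hasDerivAt_tsum_of_isPreconnected hbnd (Metric.isOpen_ball (x := (0:ℂ)) (ε := R))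
      ((convex_ball (0:ℂ) R).isPreconnected)
      (g' := fun n v => v ^ n / ((Nat.factorial (n+1) : ℕ) : ℂ))
      (y₀ := 0)
    · intro n v hv
      have h := (hasDerivAt_pow (n+1) v).div_const
        (((n : ℂ) + 1) * ((Nat.factorial (n + 1) : ℕ) : ℂ))
      convert h using 1
      rfl
      have h1 : ((n:ℂ)+1) ≠ 0 := Nat.cast_add_one_ne_zero n
      have h2 : ((Nat.factorial (n+1) : ℕ) : ℂ) ≠ 0 :=
        Nat.cast_ne_zero.2 (Nat.factorial_ne_zero (n+1))
      push_cast
      field_simp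
    · intro n v hv
      have hvR : ‖v‖ ≤ R := le_of_lt (by simpa using hv)
      have : ‖v ^ n / ((Nat.factorial (n+1) : ℕ) : ℂ)‖
          = ‖v‖ ^ n / ((Nat.factorial (n+1) : ℕ) : ℝ) := by
        rw [norm_div, norm_pow]
        norm_num
      rw [this]
      apply div_le_div₀ (by positivity) (pow_le_pow_left₀ (norm_nonneg v) hvR n)
        (by exact_mod_cast Nat.factorial_pos n)
        (by exact_mod_cast Nat.factorial_le (Nat.le_succ n))
    · exact Metric.mem_ball_self hRpos
    · simpa using summable_zero
    · simp only [Metric.mem_ball, dist_zero_right, hR]; linarith [norm_nonneg u]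
  -- identify the sum of derivatives
  have hsum_eq : (∑' n : ℕ, u ^ n / ((Nat.factorial (n+1) : ℕ) : ℂ))
      = (Complex.exp u - 1) / u := by
    have hsummable : Summable (fun n : ℕ => u ^ n / ((Nat.factorial n : ℕ) : ℂ)) :=
      NormedSpace.expSeries_div_summable u
    have hexp : Complex.exp u = ∑' n : ℕ, u ^ n / ((Nat.factorial n : ℕ) : ℂ) := by
      rw [Complex.exp_eq_exp_ℂ, NormedSpace.exp_eq_tsum_div]
    rw [eq_div_iff hu0, ← tsum_mul_right, hexp, hsummable.tsum_eq_zero_add]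
    simp only [pow_zero, Nat.factorial_zero, Nat.cast_one, div_one]
    rw [add_sub_cancel_left]
    apply tsum_congr
    intro n
    ring
  have hlog := Complex.hasDerivAt_log hslit
  have h := ((hasDerivAt_const u ((Real.eulerMascheroniConstant : ℂ))).add hlog).add hS
  rw [hsum_eq] at h
  convert h using 1
  rfl
  rfl
  rfl
  field_simp
  ring

/-- For `y < 0`, `z > 0`, `x ≥ 0`, with `w = y/√z`:
`∫₀^x e^{yt}/(zt²+1) dt = (1/√z)[(−Re Ei(iw) + Re Ei(xy+iw)) sin w
  + (Im Ei(iw) − Im Ei(xy+iw)) cos w]`. -/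
theorem integral_exp_div_quadratic (y z x : ℝ) (hy : y < 0) (hz : 0 < z) (hx : 0 ≤ x) :
    ∫ t in (0:ℝ)..x, Real.exp (y * t) / (z * t ^ 2 + 1) =
      (1 / Real.sqrt z) *
        ((-(expIntegralEi (Complex.I * (y / Real.sqrt z))).re +
            (expIntegralEi ((x * y : ℝ) + Complex.I * (y / Real.sqrt z))).re) *
            Real.sin (y / Real.sqrt z) +
          ((expIntegralEi (Complex.I * (y / Real.sqrt z))).im -
            (expIntegralEi ((x * y : ℝ) + Complex.I * (y / Real.sqrt z))).im) *
            Real.cos (y / Real.sqrt z)) := by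
  have hs : 0 < Real.sqrt z := Real.sqrt_pos.2 hz
  set s : ℝ := Real.sqrt z with hs_def
  set w : ℝ := y / s with hw_def
  have hw : w ≠ 0 := ne_of_lt (div_neg_of_neg_of_pos hy hs)
  have hs2 : s ^ 2 = z := Real.sq_sqrt hz.le
  have hws : w * s = y := div_mul_cancel₀ y (ne_of_gt hs)
  set F : ℝ → ℝ := fun t =>
    (1/s) * ((expIntegralEi (((t*y : ℝ) : ℂ) + Complex.I * (w:ℂ))).re * Real.sin w -
      (expIntegralEi (((t*y : ℝ) : ℂ) + Complex.I * (w:ℂ))).im * Real.cos w) with hF_def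
  have key : ∫ t in (0:ℝ)..x, Real.exp (y*t)/(z*t^2+1) = F x - F 0 := by
    apply intervalIntegral.integral_eq_sub_of_hasDerivAt
    · intro t _
      set u : ℂ := ((t*y : ℝ) : ℂ) + Complex.I * (w:ℂ) with hu_def
      have hu_re : u.re = t*y := by simp [hu_def]
      have hu_im : u.im = w := by simp [hu_def]
      have hu0 : u ≠ 0 := fun h => hw (by rw [← hu_im, h]; simp)
      have hD : 0 < (t*y)^2 + w^2 := by positivity
      have hnormSq : Complex.normSq u = (t*y)^2 + w^2 := by
        rw [Complex.normSq_apply, hu_re, hu_im]; ring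
      -- derivative of inner affine map
      have hlin : HasDerivAt (fun t : ℝ => ((t*y : ℝ) : ℂ) + Complex.I * (w:ℂ)) (y:ℂ) t := by
        have h1 : HasDerivAt (fun t : ℝ => (t : ℂ)) 1 t := by
          simpa using (hasDerivAt_id t).ofReal_comp
        have h2 := (h1.mul_const (y:ℂ)).add_const (Complex.I * (w:ℂ))
        simp only [one_mul] at h2
        convert h2 using 2 with t
        rfl
        push_cast; ring
      have hEi := expIntegralEi_hasDerivAt (u := u) (by rw [hu_im]; exact hw)
      have hcomp : HasDerivAt (fun t : ℝ => expIntegralEi (((t*y : ℝ) : ℂ) + Complex.I * (w:ℂ)))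
          (Complex.exp u / u * (y:ℂ)) t := by
          convert hEi.comp t hlin using 1
          rfl
          rfl
      have hre : HasDerivAt (fun t : ℝ =>
          (expIntegralEi (((t*y : ℝ) : ℂ) + Complex.I * (w:ℂ))).re)
          (Complex.exp u / u * (y:ℂ)).re t :=
        Complex.reCLM.hasFDerivAt.comp_hasDerivAt t hcomp
      have him : HasDerivAt (fun t : ℝ =>
          (expIntegralEi (((t*y : ℝ) : ℂ) + Complex.I * (w:ℂ))).im)
          (Complex.exp u / u * (y:ℂ)).im t :=
        Complex.imCLM.hasFDerivAt.comp_hasDerivAt t hcomp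
      have hF : HasDerivAt F ((1/s) * ((Complex.exp u / u * (y:ℂ)).re * Real.sin w -
          (Complex.exp u / u * (y:ℂ)).im * Real.cos w)) t :=
        (((hre.mul_const (Real.sin w)).sub (him.mul_const (Real.cos w))).const_mul (1/s))
      have hre' : (Complex.exp u / u * (y:ℂ)).re = (Complex.exp u / u).re * y := by simp
      have him' : (Complex.exp u / u * (y:ℂ)).im = (Complex.exp u / u).im * y := by simp
      have pyth : Real.sin w ^ 2 + Real.cos w ^ 2 = 1 := Real.sin_sq_add_cos_sq w
      have hcollapse : (Complex.exp u / u * (y:ℂ)).re * Real.sin w -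
          (Complex.exp u / u * (y:ℂ)).im * Real.cos w
          = Real.exp (t*y) * y * w / ((t*y)^2 + w^2) := by
        rw [hre', him', Complex.div_re, Complex.div_im, Complex.exp_re, Complex.exp_im,
          hnormSq, hu_re, hu_im]
        field_simp
        linear_combination y * w * pyth
      convert hF using 1
      rfl
      rfl
      rw [hcollapse, mul_comm y t, ← hs2, ← hws]
      field_simp
    · apply Continuous.intervalIntegrable
      apply Continuous.div
      · exact Real.continuous_exp.comp (continuous_const.mul continuous_id)
      · continuity
      · intro t; positivity
  rw [key]
  have h0 : (((0:ℝ)*y : ℝ) : ℂ) + Complex.I * (w:ℂ) = Complex.I * (w:ℂ) := by push_cast; ring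
  have harg : Complex.I * ((y:ℂ)/(s:ℂ)) = Complex.I * ((w:ℝ):ℂ) := by
    rw [hw_def]; push_cast; ring
  rw [hF_def]
  simp only [h0, harg]
  clear key hF_def
  clear F
  clear_value s w
  ring
end

section
/- For y < 0, z > 0 and x ≥ 0, ∫₀^x 2t e^{yt}/(z t² + 1) dt = (2/z)[ (Re Ei(xy + iw) − Re Ei(iw)) cos w + (Im Ei(xy + iw) − Im Ei(iw)) sin w ], where w = y/√z and Ei is the exponential integral. -/
open Real Complex

-- step 1: derivative of the series part
lemma hasDerivAt_series (w : ℂ) :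
    HasDerivAt (fun z : ℂ => ∑' n : ℕ,
        z ^ (n + 1) / (((n : ℂ) + 1) * ((Nat.factorial (n + 1) : ℕ) : ℂ)))
      (∑' n : ℕ, w ^ n / ((Nat.factorial (n + 1) : ℕ) : ℂ)) w := by
  set R : ℝ := ‖w‖ + 1 with hR
  have hRpos : 0 < R := by positivity
  have hu : Summable (fun n : ℕ => R ^ n / (Nat.factorial (n+1) : ℝ)) := by
    refine Summable.of_nonneg_of_le (fun n => by positivity) (fun n => ?_)
      (Real.summable_pow_div_factorial R)
    gcongr
    exact Nat.le_succ n
  refine hasDerivAt_tsum_of_isPreconnected hu (Metric.isOpen_ball)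
    ((convex_ball (0:ℂ) R).isPreconnected)
    (g := fun (n : ℕ) (z : ℂ) => z ^ (n + 1) / (((n : ℂ) + 1) * ((Nat.factorial (n + 1) : ℕ) : ℂ)))
    (g' := fun (n : ℕ) (z : ℂ) => z ^ n / ((Nat.factorial (n + 1) : ℕ) : ℂ))
    (fun n v _ => ?_) (fun n v hv => ?_) (y₀ := 0) ?_ ?_ ?_
  · have h := (hasDerivAt_pow (n + 1) v).div_const (((n : ℂ) + 1) * ((Nat.factorial (n + 1) : ℕ) : ℂ))
    convert h using 1
    · rfl
    have hn : ((n : ℂ) + 1) ≠ 0 := Nat.cast_add_one_ne_zero n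
    rw [Nat.add_sub_cancel]
    push_cast
    rw [mul_div_mul_left _ _ hn]
  · simp only [norm_div, norm_pow, Complex.norm_natCast]
    rw [Metric.mem_ball, dist_zero_right] at hv
    gcongr
  · simpa using hRpos
  · simpa using summable_zero
  · simp [Metric.mem_ball, hR]

lemma tsum_series_eq (w : ℂ) (hw : w ≠ 0) :
    ∑' n : ℕ, w ^ n / ((Nat.factorial (n + 1) : ℕ) : ℂ) = (Complex.exp w - 1) / w := by
  have hexp : Complex.exp w = ∑' n : ℕ, w ^ n / (Nat.factorial n : ℂ) := by
    rw [Complex.exp_eq_exp_ℂ, NormedSpace.exp_eq_tsum_div]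
  have hsum : Summable (fun n : ℕ => w ^ n / (Nat.factorial n : ℂ)) :=
    NormedSpace.expSeries_div_summable w
  have h0 : ∑' n : ℕ, w ^ n / (Nat.factorial n : ℂ)
      = 1 + ∑' n : ℕ, w ^ (n + 1) / (Nat.factorial (n + 1) : ℂ) := by
    rw [hsum.tsum_eq_zero_add]
    simp
  have hmul : ∑' n : ℕ, w ^ (n + 1) / (Nat.factorial (n + 1) : ℂ)
      = w * ∑' n : ℕ, w ^ n / (Nat.factorial (n + 1) : ℂ) := by
    rw [← tsum_mul_left]
    congr 1; ext n; rw [pow_succ]; ring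
  have : Complex.exp w - 1 = w * ∑' n : ℕ, w ^ n / (Nat.factorial (n + 1) : ℂ) := by
    rw [hexp, h0, ← hmul]; ring
  rw [this, mul_div_cancel_left₀ _ hw]

lemma hasDerivAt_Ei (w : ℂ) (hw : w.im ≠ 0) :
    HasDerivAt expIntegralEi (Complex.exp w / w) w := by
  have hw0 : w ≠ 0 := fun h => hw (by simp [h])
  have hslit : w ∈ Complex.slitPlane := Complex.mem_slitPlane_iff.2 (Or.inr hw)
  have h1 : HasDerivAt (fun z : ℂ => (Real.eulerMascheroniConstant : ℂ) + Complex.log z)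
      w⁻¹ w := (Complex.hasDerivAt_log hslit).const_add _
  have h2 := hasDerivAt_series w
  rw [tsum_series_eq w hw0] at h2
  have key : Complex.exp w / w = w⁻¹ + (Complex.exp w - 1) / w := by
    rw [inv_eq_one_div, ← add_div]; ring_nf
  rw [key]
  exact h1.add h2


/-- For `y < 0`, `z > 0`, `x ≥ 0`, with `w = y/√z`:
`∫₀^x 2t e^{yt}/(zt²+1) dt = (2/z)[(Re Ei(xy+iw) − Re Ei(iw)) cos w
  + (Im Ei(xy+iw) − Im Ei(iw)) sin w]`. -/
theorem integral_linear_exp_div_quadratic (y z x : ℝ) (hy : y < 0) (hz : 0 < z) (hx : 0 ≤ x) :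
    ∫ t in (0:ℝ)..x, 2 * t * Real.exp (y * t) / (z * t ^ 2 + 1) =
      (2 / z) *
        (((expIntegralEi ((x * y : ℝ) + Complex.I * (y / Real.sqrt z))).re -
            (expIntegralEi (Complex.I * (y / Real.sqrt z))).re) *
            Real.cos (y / Real.sqrt z) +
          ((expIntegralEi ((x * y : ℝ) + Complex.I * (y / Real.sqrt z))).im -
            (expIntegralEi (Complex.I * (y / Real.sqrt z))).im) *
            Real.sin (y / Real.sqrt z)) := by
  have hzs : 0 < Real.sqrt z := Real.sqrt_pos.2 hz
  set c : ℝ := y / Real.sqrt z with hc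
  have hcneg : c < 0 := div_neg_of_neg_of_pos hy hzs
  have hcc : c * c = y ^ 2 / z := by
    rw [hc, div_mul_div_comm, Real.mul_self_sqrt hz.le]; ring
  set p : ℝ → ℂ := fun t => ((y * t : ℝ) : ℂ) + Complex.I * (c : ℂ) with hp
  have hpim : ∀ t : ℝ, (p t).im = c := by intro t; simp [hp]
  have hpre : ∀ t : ℝ, (p t).re = y * t := by intro t; simp [hp]
  set g : ℝ → ℝ :=
    fun t => (2 / z) * ((Complex.exp (-(Complex.I * (c : ℂ))) * expIntegralEi (p t)).re) with hg
  have hder : ∀ t : ℝ, HasDerivAt g (2 * t * Real.exp (y * t) / (z * t ^ 2 + 1)) t := by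
    intro t
    have h1 : HasDerivAt p ((y : ℝ) : ℂ) t := by
      have h0 : HasDerivAt (fun s : ℝ => ((y * s : ℝ) : ℂ)) ((y : ℝ) : ℂ) t := by
        have := (((hasDerivAt_id t).const_mul y).ofReal_comp (z := t))
        simpa using this
      simpa [hp] using h0.add_const (Complex.I * (c : ℂ))
    have h2 : HasDerivAt expIntegralEi (Complex.exp (p t) / p t) (p t) :=
      hasDerivAt_Ei _ (by rw [hpim t]; exact ne_of_lt hcneg)
    have h3 := (h2.comp t h1).const_mul (Complex.exp (-(Complex.I * (c : ℂ))))
    have h4 := (Complex.reCLM.hasFDerivAt.comp_hasDerivAt t h3).const_mul (2 / z)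
    have hsplit : Complex.exp (-(Complex.I * (c : ℂ))) * (Complex.exp (p t) / p t * ((y : ℝ) : ℂ))
        = ((Real.exp (y * t) : ℝ) : ℂ) * (((y : ℝ) : ℂ) / p t) := by
      have e1 : Complex.exp (p t)
          = ((Real.exp (y * t) : ℝ) : ℂ) * Complex.exp (Complex.I * (c : ℂ)) := by
        rw [hp, Complex.exp_add, Complex.ofReal_exp]
      have e2 : Complex.exp (-(Complex.I * (c : ℂ))) * Complex.exp (Complex.I * (c : ℂ)) = 1 := by
        rw [← Complex.exp_add]; simp
      calc Complex.exp (-(Complex.I * (c : ℂ))) * (Complex.exp (p t) / p t * ((y : ℝ) : ℂ))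
          = (Complex.exp (-(Complex.I * (c : ℂ))) * Complex.exp (Complex.I * (c : ℂ)))
              * (((Real.exp (y * t) : ℝ) : ℂ) * (((y : ℝ) : ℂ) / p t)) := by rw [e1]; ring
        _ = ((Real.exp (y * t) : ℝ) : ℂ) * (((y : ℝ) : ℂ) / p t) := by rw [e2, one_mul]
    have hval : (2 / z) * (Complex.reCLM
          (Complex.exp (-(Complex.I * (c : ℂ))) * (Complex.exp (p t) / p t * ((y : ℝ) : ℂ))))
        = 2 * t * Real.exp (y * t) / (z * t ^ 2 + 1) := by
      rw [Complex.reCLM_apply, hsplit, Complex.re_ofReal_mul, Complex.div_re,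
        Complex.normSq_apply, hpre, hpim]
      simp only [Complex.ofReal_re, Complex.ofReal_im]
      rw [hcc]
      have h7 : (y * t) * (y * t) + y ^ 2 / z = y ^ 2 * (z * t ^ 2 + 1) / z := by
        field_simp
      rw [h7]
      have h6 : z * t ^ 2 + 1 ≠ 0 := by positivity
      have hy0 : y ≠ 0 := ne_of_lt hy
      have hz0 : z ≠ 0 := ne_of_gt hz
      rw [zero_mul, zero_div, add_zero]
      have h8 : y * (y * t) / (y ^ 2 * (z * t ^ 2 + 1) / z) = z * t / (z * t ^ 2 + 1) := by
        rw [div_div_eq_mul_div, div_eq_div_iff (by positivity) h6]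
        ring
      rw [h8]
      field_simp
    rw [← hval]
    exact h4
  have hint : IntervalIntegrable (fun t => 2 * t * Real.exp (y * t) / (z * t ^ 2 + 1))
      MeasureTheory.volume 0 x := by
    apply Continuous.intervalIntegrable
    apply Continuous.div (by continuity) (by continuity)
    intro t; positivity
  rw [intervalIntegral.integral_eq_sub_of_hasDerivAt (fun t _ => hder t) hint]
  have hexpc : Complex.exp (-(Complex.I * (c : ℂ)))
      = ((Real.cos c : ℝ) : ℂ) - ((Real.sin c : ℝ) : ℂ) * Complex.I := by
    rw [show -(Complex.I * (c : ℂ)) = ((-c : ℝ) : ℂ) * Complex.I by push_cast; ring,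
      Complex.exp_mul_I]
    push_cast
    simp [Complex.cos_neg, Complex.sin_neg]
    ring
  have hre : ∀ W : ℂ, (Complex.exp (-(Complex.I * (c : ℂ))) * W).re
      = Real.cos c * W.re + Real.sin c * W.im := by
    intro W
    rw [hexpc]
    simp only [Complex.mul_re, Complex.sub_re, Complex.sub_im, Complex.ofReal_re,
      Complex.ofReal_im, Complex.mul_im, Complex.I_re, Complex.I_im]
    ring
  have harg1 : ((x * y : ℝ) : ℂ) + Complex.I * ((y : ℂ) / ((Real.sqrt z : ℝ) : ℂ)) = p x := by
    rw [hp, hc]; push_cast; ring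
  have harg2 : Complex.I * ((y : ℂ) / ((Real.sqrt z : ℝ) : ℂ)) = p 0 := by
    rw [hp, hc]; push_cast; ring
  rw [harg1, harg2]
  simp only [hg, hre]
  ring
end

section
/- Suppose P(γ(R) ≥ Γ) = e^{−λ C (L²KΓ)^{2/α}} / (KΓ R^{−β} + 1) and R is uniform on the annulus with inner radius R_f and outer radius R_i > R_f (density 2r/(R_i² − R_f²)). Then E_R[P(γ(R) ≤ Γ)] = 1 − (e^{−λC(L²KΓ)^{2/α}}/(R_i² − R_f²)) · ( R_i² − R_f² + R_f² ₂F₁(2/β, 1; 1+2/β; −R_f^β/(KΓ)) − R_i² ₂F₁(2/β, 1; 1+2/β; −R_i^β/(KΓ)) ). -/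
open Real

open MeasureTheory in
lemma key_hyp (K' β R : ℝ) (hK : 0 < K') (hβ : 2 < β) (hR : 0 < R) :
    R ^ 2 * gaussHypergeometric (2 / β) 1 (1 + 2 / β) (-(R ^ β / K')) =
      ∫ r in (0:ℝ)..R, 2 * r * K' / (K' + r ^ β) := by
  have hβ0 : 0 < β := by linarith
  have hβne : β ≠ 0 := ne_of_gt hβ0
  have ha : 0 < 2 / β := by positivity
  have hT : 0 < R ^ β := Real.rpow_pos_of_pos hR β
  set a : ℝ := 2 / β with ha_def
  set T : ℝ := R ^ β with hT_def
  set z : ℝ := -(T / K') with hz_def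
  have hB : 0 < K' + T := by positivity
  -- prefactor
  have hpre : Real.Gamma (1 + a) / (Real.Gamma 1 * Real.Gamma (1 + a - 1)) = a := by
    have h1 : 1 + a - 1 = a := by ring
    rw [h1, add_comm, Real.Gamma_add_one (ne_of_gt ha), Real.Gamma_one]
    field_simp [(Real.Gamma_pos_of_pos ha).ne']
  have hGH : gaussHypergeometric a 1 (1 + a) z
      = a * ∫ u in (0:ℝ)..1, (1 - u) ^ (a - 1) * (1 - z * u) ^ (-a) := by
    rw [gaussHypergeometric, hpre]
    congr 1
    apply intervalIntegral.integral_congr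
    intro u _
    simp only [show (1:ℝ) - 1 = 0 from by ring, show 1 + a - 1 - 1 = a - 1 from by ring,
      Real.rpow_zero, one_mul]
  -- derivative of the substitution map
  have hderiv : ∀ x ∈ Set.Ioo (0:ℝ) R,
      HasDerivWithinAt (fun r : ℝ => K' * (T - r ^ β) / (T * (K' + r ^ β)))
        (-(β * x ^ (β - 1) * K' * (K' + T) / (T * (K' + x ^ β) ^ 2))) (Set.Ioo (0:ℝ) R) x := by
    intro x hx
    have hx0 : 0 < x := hx.1
    have ht : 0 < x ^ β := Real.rpow_pos_of_pos hx0 β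
    have hA : 0 < K' + x ^ β := by positivity
    have hpow : HasDerivAt (fun y : ℝ => y ^ β) (β * x ^ (β - 1)) x :=
      Real.hasDerivAt_rpow_const (Or.inl (ne_of_gt hx0))
    have hnum : HasDerivAt (fun y : ℝ => K' * (T - y ^ β)) (K' * (-(β * x ^ (β - 1)))) x :=
      (hpow.const_sub T).const_mul K'
    have hden : HasDerivAt (fun y : ℝ => T * (K' + y ^ β)) (T * (β * x ^ (β - 1))) x :=
      (hpow.const_add K').const_mul T
    have h0 : T * (K' + x ^ β) ≠ 0 := by positivity
    have hdiv := hnum.div hden h0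
    have heq : (K' * (-(β * x ^ (β - 1))) * (T * (K' + x ^ β)) -
        K' * (T - x ^ β) * (T * (β * x ^ (β - 1)))) / (T * (K' + x ^ β)) ^ 2 =
        -(β * x ^ (β - 1) * K' * (K' + T) / (T * (K' + x ^ β) ^ 2)) := by
      field_simp
      ring
    rw [heq] at hdiv
    exact hdiv.hasDerivWithinAt
  -- injectivity
  have hinj : Set.InjOn (fun r : ℝ => K' * (T - r ^ β) / (T * (K' + r ^ β)))
      (Set.Ioo (0:ℝ) R) := by
    intro r1 h1 r2 h2 heq
    have ht1 : 0 < r1 ^ β := Real.rpow_pos_of_pos h1.1 β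
    have ht2 : 0 < r2 ^ β := Real.rpow_pos_of_pos h2.1 β
    have hA1 : (0:ℝ) < K' + r1 ^ β := by positivity
    have hA2 : (0:ℝ) < K' + r2 ^ β := by positivity
    simp only at heq
    have heq2 : r1 ^ β = r2 ^ β := by
      field_simp [hT.ne'] at heq
      have h5 : K' * T * (K' + T) * (r1 ^ β - r2 ^ β) = 0 := by linear_combination (-K' * T) * heq
      have h6 : K' * T * (K' + T) ≠ 0 := by positivity
      have := (mul_eq_zero.mp h5).resolve_left h6
      linarith
    exact Real.rpow_left_injOn hβne h1.1.le h2.1.le heq2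
  -- image
  have himg : (fun r : ℝ => K' * (T - r ^ β) / (T * (K' + r ^ β))) '' Set.Ioo (0:ℝ) R
      = Set.Ioo (0:ℝ) 1 := by
    apply Set.eq_of_subset_of_subset
    · rintro u ⟨r, hr, rfl⟩
      have hr0 : 0 < r := hr.1
      have ht : 0 < r ^ β := Real.rpow_pos_of_pos hr0 β
      have htT : r ^ β < T := Real.rpow_lt_rpow hr0.le hr.2 hβ0
      have hA : (0:ℝ) < K' + r ^ β := by positivity
      constructor
      · have : 0 < T - r ^ β := by linarith
        positivity
      · rw [div_lt_one (by positivity)]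
        nlinarith
    · intro u hu
      have hu0 : 0 < u := hu.1
      have hu1 : u < 1 := hu.2
      have hden : 0 < u * T + K' := by positivity
      have hQ : 0 < K' * T * (1 - u) / (u * T + K') := by
        have : 0 < 1 - u := by linarith
        positivity
      have hQT : K' * T * (1 - u) / (u * T + K') < T := by
        rw [div_lt_iff₀ hden]
        nlinarith [mul_pos hT (mul_pos hu0 hB)]
      refine ⟨(K' * T * (1 - u) / (u * T + K')) ^ (β⁻¹ : ℝ), ⟨Real.rpow_pos_of_pos hQ _, ?_⟩, ?_⟩
      · have hRT : R = T ^ (β⁻¹ : ℝ) := by rw [hT_def, Real.rpow_rpow_inv hR.le hβne]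
        rw [hRT]
        exact Real.rpow_lt_rpow hQ.le hQT (by positivity)
      · have hrb : ((K' * T * (1 - u) / (u * T + K')) ^ (β⁻¹ : ℝ)) ^ β
            = K' * T * (1 - u) / (u * T + K') := Real.rpow_inv_rpow hQ.le hβne
        simp only [hrb]
        rw [div_eq_iff]
        · field_simp
          ring
        · have : 0 < K' + K' * T * (1 - u) / (u * T + K') := by positivity
          positivity
  -- pointwise identity for the transformed integrand
  have hpt : ∀ r ∈ Set.Ioo (0:ℝ) R,
      |(-(β * r ^ (β - 1) * K' * (K' + T) / (T * (K' + r ^ β) ^ 2)))| •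
        ((1 - K' * (T - r ^ β) / (T * (K' + r ^ β))) ^ (a - 1) *
          (1 - z * (K' * (T - r ^ β) / (T * (K' + r ^ β)))) ^ (-a))
      = β / (2 * R ^ 2) * (2 * r * K' / (K' + r ^ β)) := by
    intro r hr
    have hr0 : 0 < r := hr.1
    have ht : 0 < r ^ β := Real.rpow_pos_of_pos hr0 β
    have hA : (0:ℝ) < K' + r ^ β := by positivity
    have hrb1 : 0 < r ^ (β - 1) := Real.rpow_pos_of_pos hr0 _
    have h1 : 1 - K' * (T - r ^ β) / (T * (K' + r ^ β))
        = r ^ β * (K' + T) / (T * (K' + r ^ β)) := by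
      field_simp
      ring
    have h2 : 1 - z * (K' * (T - r ^ β) / (T * (K' + r ^ β)))
        = (K' + T) / (K' + r ^ β) := by
      rw [hz_def]
      field_simp
      ring
    have h3 : |(-(β * r ^ (β - 1) * K' * (K' + T) / (T * (K' + r ^ β) ^ 2)))|
        = β * r ^ (β - 1) * K' * (K' + T) / (T * (K' + r ^ β) ^ 2) := by
      rw [abs_neg, abs_of_pos (by positivity)]
    rw [h1, h2, h3, smul_eq_mul]
    set X : ℝ := r ^ β * (K' + T) / (T * (K' + r ^ β)) with hX_def
    set Y : ℝ := (K' + T) / (K' + r ^ β) with hY_def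
    have hX : 0 < X := by rw [hX_def]; positivity
    have hY : 0 < Y := by rw [hY_def]; positivity
    have hXa : X ^ (a - 1) = X ^ a / X := by
      rw [Real.rpow_sub hX, Real.rpow_one]
    have hYa : Y ^ (-a) = (Y ^ a)⁻¹ := Real.rpow_neg hY.le a
    have hXY : X / Y = r ^ β / T := by
      rw [hX_def, hY_def]
      field_simp
    have hXYa : X ^ a * (Y ^ a)⁻¹ = r ^ 2 / R ^ 2 := by
      rw [← div_eq_mul_inv, ← Real.div_rpow hX.le hY.le, hXY,
        Real.div_rpow ht.le hT.le, hT_def, ← Real.rpow_mul hr0.le, ← Real.rpow_mul hR.le]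
      have hba : β * a = 2 := by rw [ha_def]; field_simp
      rw [hba]
      norm_num [show ((2:ℝ) = ((2:ℕ):ℝ)) by norm_num, Real.rpow_natCast]
    have hb1 : r ^ (β - 1) = r ^ β / r := by
      rw [Real.rpow_sub hr0, Real.rpow_one]
    calc β * r ^ (β - 1) * K' * (K' + T) / (T * (K' + r ^ β) ^ 2) * (X ^ (a - 1) * Y ^ (-a))
        = β * r ^ (β - 1) * K' * (K' + T) / (T * (K' + r ^ β) ^ 2) *
            (X ^ a * (Y ^ a)⁻¹ / X) := by rw [hXa, hYa]; ring
      _ = β * r ^ (β - 1) * K' * (K' + T) / (T * (K' + r ^ β) ^ 2) *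
            ((r ^ 2 / R ^ 2) / X) := by rw [hXYa]
      _ = β / (2 * R ^ 2) * (2 * r * K' / (K' + r ^ β)) := by
          rw [hX_def, hb1]
          field_simp
  -- assemble
  have himage := MeasureTheory.integral_image_eq_integral_abs_deriv_smul measurableSet_Ioo
    hderiv hinj (fun u => (1 - u) ^ (a - 1) * (1 - z * u) ^ (-a))
  rw [himg] at himage
  have hIoo : ∫ u in (0:ℝ)..1, (1 - u) ^ (a - 1) * (1 - z * u) ^ (-a)
      = ∫ u in Set.Ioo (0:ℝ) 1, (1 - u) ^ (a - 1) * (1 - z * u) ^ (-a) := by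
    rw [intervalIntegral.integral_of_le zero_le_one, MeasureTheory.integral_Ioc_eq_integral_Ioo]
  have hcongr : ∫ x in Set.Ioo (0:ℝ) R,
      |(-(β * x ^ (β - 1) * K' * (K' + T) / (T * (K' + x ^ β) ^ 2)))| •
        ((1 - K' * (T - x ^ β) / (T * (K' + x ^ β))) ^ (a - 1) *
          (1 - z * (K' * (T - x ^ β) / (T * (K' + x ^ β)))) ^ (-a))
      = ∫ x in Set.Ioo (0:ℝ) R, β / (2 * R ^ 2) * (2 * x * K' / (K' + x ^ β)) :=
    MeasureTheory.setIntegral_congr_fun measurableSet_Ioo (fun x hx => hpt x hx)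
  have hfin : ∫ x in Set.Ioo (0:ℝ) R, β / (2 * R ^ 2) * (2 * x * K' / (K' + x ^ β))
      = β / (2 * R ^ 2) * ∫ x in Set.Ioo (0:ℝ) R, 2 * x * K' / (K' + x ^ β) :=
    MeasureTheory.integral_const_mul _ _
  have hback : ∫ x in Set.Ioo (0:ℝ) R, 2 * x * K' / (K' + x ^ β)
      = ∫ r in (0:ℝ)..R, 2 * r * K' / (K' + r ^ β) := by
    rw [intervalIntegral.integral_of_le hR.le, MeasureTheory.integral_Ioc_eq_integral_Ioo]
  rw [hGH, hIoo, himage, hcongr, hfin, hback]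
  have hRne : (R:ℝ) ^ 2 ≠ 0 := by positivity
  field_simp [ha_def]
  have hab : a * β = 2 := by rw [ha_def]; field_simp
  rw [hab]
  congr 1
  apply intervalIntegral.integral_congr
  intro r _
  dsimp only
  ring

open intervalIntegral in
/-- Lemma 4: averaging the conditional SIR CDF
`1 − e^{−λC(L²KΓ)^{2/α}}/(KΓ r^{−β}+1)` over a uniform radius on the annulus `[R_f, R_i]`
yields the closed-form hypergeometric expression. -/
theorem avg_sir_cdf_zone_Fb (lam C K L α β Γ R_f R_i : ℝ)
    (hlam : 0 < lam) (hC : 0 < C) (hK : 0 < K) (hL : 0 < L) (hα : 0 < α) (hβ : 2 < β)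
    (hΓ : 0 < Γ) (hRf : 0 < R_f) (hRi : R_f < R_i) :
    ∫ r in R_f..R_i,
        (1 - Real.exp (-(lam * C * (L ^ 2 * K * Γ) ^ (2 / α))) / (K * Γ * r ^ (-β) + 1)) *
          (2 * r / (R_i ^ 2 - R_f ^ 2)) =
      1 - Real.exp (-(lam * C * (L ^ 2 * K * Γ) ^ (2 / α))) / (R_i ^ 2 - R_f ^ 2) *
        (R_i ^ 2 - R_f ^ 2 +
          R_f ^ 2 * gaussHypergeometric (2 / β) 1 (1 + 2 / β) (-(R_f ^ β / (K * Γ))) -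
          R_i ^ 2 * gaussHypergeometric (2 / β) 1 (1 + 2 / β) (-(R_i ^ β / (K * Γ)))) := by
  have hK' : 0 < K * Γ := mul_pos hK hΓ
  have hβ0 : 0 < β := by linarith
  have hRi0 : 0 < R_i := lt_trans hRf hRi
  have hS : (0:ℝ) < R_i ^ 2 - R_f ^ 2 := by nlinarith
  set E : ℝ := Real.exp (-(lam * C * (L ^ 2 * K * Γ) ^ (2 / α))) with hE_def
  set S : ℝ := R_i ^ 2 - R_f ^ 2 with hS_def
  -- continuity of the auxiliary function on [0, ∞)
  have hcontpow : Continuous fun r : ℝ => r ^ β := by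
    apply continuous_iff_continuousAt.mpr
    intro x
    exact Real.continuousAt_rpow_const x β (Or.inr hβ0.le)
  have hhcont : ContinuousOn (fun r : ℝ => 2 * r * (K * Γ) / (K * Γ + r ^ β)) (Set.Ici 0) := by
    apply ContinuousOn.div
    · exact ((continuous_const.mul continuous_id).mul continuous_const).continuousOn
    · exact (continuous_const.add hcontpow).continuousOn
    · intro r hr
      have : 0 ≤ r ^ β := Real.rpow_nonneg hr β
      positivity
  have hInt : ∀ p q : ℝ, 0 ≤ p → 0 ≤ q →
      IntervalIntegrable (fun r : ℝ => 2 * r * (K * Γ) / (K * Γ + r ^ β)) MeasureTheory.volume p q := by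
    intro p q hp hq
    apply ContinuousOn.intervalIntegrable
    apply hhcont.mono
    intro x hx
    rcases Set.mem_uIcc.mp hx with h | h
    · exact le_trans hp h.1
    · exact le_trans hq h.1
  -- rewrite the integrand
  have hcongr : (∫ r in R_f..R_i,
      (1 - E / (K * Γ * r ^ (-β) + 1)) * (2 * r / S))
      = ∫ r in R_f..R_i,
        ((1 - E) * (2 / S * r) + E / S * (2 * r * (K * Γ) / (K * Γ + r ^ β))) := by
    apply intervalIntegral.integral_congr
    intro r hr
    rw [Set.uIcc_of_le hRi.le] at hr
    have hr0 : 0 < r := lt_of_lt_of_le hRf hr.1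
    have ht : 0 < r ^ β := Real.rpow_pos_of_pos hr0 β
    have hneg : r ^ (-β) = (r ^ β)⁻¹ := Real.rpow_neg hr0.le β
    simp only [hneg]
    have hd : (0:ℝ) < K * Γ * (r ^ β)⁻¹ + 1 := by positivity
    field_simp
    ring
  rw [hcongr]
  have hint1 : IntervalIntegrable (fun r : ℝ => (1 - E) * (2 / S * r))
      MeasureTheory.volume R_f R_i :=
    (continuous_const.mul (continuous_const.mul continuous_id)).intervalIntegrable _ _
  have hint2 : IntervalIntegrable (fun r : ℝ => E / S * (2 * r * (K * Γ) / (K * Γ + r ^ β)))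
      MeasureTheory.volume R_f R_i :=
    (hInt R_f R_i hRf.le hRi0.le).const_mul _
  rw [intervalIntegral.integral_add hint1 hint2]
  have e1 : (∫ r in R_f..R_i, (1 - E) * (2 / S * r)) = 1 - E := by
    rw [integral_const_mul, integral_const_mul, integral_id]
    rw [← hS_def]
    field_simp
  have e2 : (∫ r in R_f..R_i, E / S * (2 * r * (K * Γ) / (K * Γ + r ^ β)))
      = E / S * ((∫ r in (0:ℝ)..R_i, 2 * r * (K * Γ) / (K * Γ + r ^ β))
          - ∫ r in (0:ℝ)..R_f, 2 * r * (K * Γ) / (K * Γ + r ^ β)) := by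
    rw [intervalIntegral.integral_const_mul,
      intervalIntegral.integral_interval_sub_left (hInt 0 R_i le_rfl hRi0.le)
        (hInt 0 R_f le_rfl hRf.le)]
  rw [e1, e2, ← key_hyp (K * Γ) β R_i hK' hβ hRi0, ← key_hyp (K * Γ) β R_f hK' hβ hRf]
  field_simp
  ring
end
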